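/- arXiv:2505.01398 — 5 statements merged into one kernel-verified Lean document; each statement's English description precedes it below -/
import Mathlib

section
/- The pair (R_t, h_t) satisfies the partial trace identities tr₂((id ⊗ h_t) ∘ R_t) = id_Y and tr₂((id ⊗ h_t) ∘ R_t^{-1}) = id_Y. -/
open Matrix Kronecker

noncomputable section

variable {K : Type*} [Field K]

/-- Entries of the Alexander R-matrix `R_t` (without the `t^{-1/2}` prefactor),
rows `(k,l)`, columns `(i,j)`; here `s = t^{1/2}`, `t = s^2`. -/
def RtE (s : K) : ℕ → ℕ → ℕ → ℕ → K
  | 0, 0, 0, 0 => 1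
  | 0, 1, 1, 0 => 1
  | 1, 0, 0, 1 => s ^ 2
  | 1, 0, 1, 0 => 1 - s ^ 2
  | 1, 1, 1, 1 => -s ^ 2
  | _, _, _, _ => 0

/-- The Alexander R-matrix `R_t = t^{-1/2}·[[1,0,0,0],[0,0,1,0],[0,t,1-t,0],[0,0,0,-t]]`
in the basis `(v₀⊗v₀, v₀⊗v₁, v₁⊗v₀, v₁⊗v₁)`, with `s = t^{1/2}`. -/
def Rt (s : K) : Matrix (Fin 2 × Fin 2) (Fin 2 × Fin 2) K :=
  s⁻¹ • Matrix.of fun p q => RtE s p.1.val p.2.val q.1.val q.2.val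

/-- The Alexander enhancement `h_t = t^{1/2}·diag(1,-1)`, with `s = t^{1/2}`. -/
def ht (s : K) : Matrix (Fin 2) (Fin 2) K := s • Matrix.diagonal ![1, -1]

/-- Partial trace over the second tensor factor. -/
def ptr2 {α β : Type*} [Fintype β] (f : Matrix (α × β) (α × β) K) : Matrix α α K :=
  Matrix.of fun k i => ∑ j, f (k, j) (i, j)

/-- Entries of the inverse R-matrix (times `s`). -/
def RinvE (s : K) : ℕ → ℕ → ℕ → ℕ → K
  | 0, 0, 0, 0 => s ^ 2
  | 0, 1, 0, 1 => s ^ 2 - 1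
  | 0, 1, 1, 0 => 1
  | 1, 0, 0, 1 => s ^ 2
  | 1, 1, 1, 1 => -1
  | _, _, _, _ => 0

def Rinv (s : K) : Matrix (Fin 2 × Fin 2) (Fin 2 × Fin 2) K :=
  s⁻¹ • Matrix.of fun p q => RinvE s p.1.val p.2.val q.1.val q.2.val

set_option maxHeartbeats 2000000 in
lemma Rt_mul_Rinv (s : K) (hs : s ≠ 0) : Rt s * Rinv s = 1 := by
  ext ⟨a, b⟩ ⟨c, d⟩
  fin_cases a <;> fin_cases b <;> fin_cases c <;> fin_cases d <;>
    simp [Rt, Rinv, RtE, RinvE, Matrix.mul_apply, Fintype.sum_prod_type,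
      Fin.sum_univ_two, Matrix.one_apply, Prod.ext_iff] <;>
    first | rfl | (field_simp; try ring)

lemma Rt_inv_eq (s : K) (hs : s ≠ 0) : (Rt s)⁻¹ = Rinv s :=
  Matrix.inv_eq_right_inv (Rt_mul_Rinv s hs)

set_option maxHeartbeats 2000000 in
/-- the partial trace identities `tr₂((id ⊗ h_t) ∘ R_t^{±1}) = id_Y`. -/
theorem alexander_partial_trace (s : K) (hs : s ≠ 0) :
    ptr2 (((1 : Matrix (Fin 2) (Fin 2) K) ⊗ₖ ht s) * Rt s) = 1 ∧
      ptr2 (((1 : Matrix (Fin 2) (Fin 2) K) ⊗ₖ ht s) * (Rt s)⁻¹) = 1 := by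
  rw [Rt_inv_eq s hs]
  constructor <;>
  · ext k i
    fin_cases k <;> fin_cases i <;>
      simp [ptr2, Rt, Rinv, RtE, RinvE, ht, Matrix.mul_apply, Fintype.sum_prod_type,
        Fin.sum_univ_two, Matrix.one_apply, Matrix.kroneckerMap_apply,
        Matrix.diagonal, Prod.ext_iff] <;>
      first | rfl | (field_simp; try ring)
end
end

section
/- Every endomorphism F of Y⊗Y that is diagonal-in-degree of the form F = diag-blocks [[a,0,0,0],[0,b,c,0],[0,d,e,0],[0,0,0,f]] and satisfies the two equations R_t² ∘ F = F ∘ R_t² and (R_t⊗id)∘(id⊗R_t)∘(F⊗id) = (id⊗F)∘(R_t⊗id)∘(id⊗R_t) necessarily satisfies a = b + c, d = c·t, e = b + c(1−t), and f = b − c·t. -/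
open Matrix Kronecker

noncomputable section

variable {K : Type*} [Field K]

/-- `A ⊗ id` acting on factors 1,2 of a triple tensor product (matrix form). -/
def lift12 {α : Type*} [DecidableEq α] (A : Matrix (α × α) (α × α) K) :
    Matrix (α × α × α) (α × α × α) K :=
  Matrix.of fun p q => A (p.1, p.2.1) (q.1, q.2.1) * (if p.2.2 = q.2.2 then 1 else 0)

/-- `id ⊗ A` acting on factors 2,3 of a triple tensor product (matrix form). -/
def lift23 {α : Type*} [DecidableEq α] (A : Matrix (α × α) (α × α) K) :
    Matrix (α × α × α) (α × α × α) K :=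
  Matrix.of fun p q => (if p.1 = q.1 then 1 else 0) * A p.2 q.2

/-- Entries of the degree-preserving endomorphism
`F = [[a,0,0,0],[0,b,c,0],[0,d,e,0],[0,0,0,f]]` of `Y ⊗ Y`. -/
def FmatE (a b c d e f : K) : ℕ → ℕ → ℕ → ℕ → K
  | 0, 0, 0, 0 => a
  | 0, 1, 0, 1 => b
  | 0, 1, 1, 0 => c
  | 1, 0, 0, 1 => d
  | 1, 0, 1, 0 => e
  | 1, 1, 1, 1 => f
  | _, _, _, _ => 0

def Fmat (a b c d e f : K) : Matrix (Fin 2 × Fin 2) (Fin 2 × Fin 2) K :=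
  Matrix.of fun p q => FmatE a b c d e f p.1.val p.2.val q.1.val q.2.val

/-- The function field `ℚ(x0)`. -/
abbrev K4 : Type := FractionRing (MvPolynomial (Fin 1) ℚ)

/-- The generator `t^{1/2}` of `ℚ(t^{1/2})`. -/
def sV : K4 := algebraMap (MvPolynomial (Fin 1) ℚ) K4 (MvPolynomial.X 0)

/-! The middle block of `R_t²` is not scalar (its off-diagonal entries are multiples of `1 - t`),
so a matrix commuting with it is a polynomial in it; on that block this makes `F = b + c·t^{1/2}·R_t`,
which gives `d` and `e`. One entry of each side of the braid-type relation then gives `a = e + c t`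
and `f = b - c t`. All cancellations use only `t^{1/2} ≠ 0` and `t ≠ 1`. -/

section Relations

variable {s a b c d e f : K}

theorem Fmat_middle_of_commute_Rt_sq (hs : s ≠ 0) (ht : s ^ 2 ≠ 1)
    (h : Rt s ^ 2 * Fmat a b c d e f = Fmat a b c d e f * Rt s ^ 2) :
    d = c * s ^ 2 ∧ e = b + c * (1 - s ^ 2) := by
  have hu : 1 - s ^ 2 ≠ 0 := sub_ne_zero.mpr ht.symm
  have E₁ := congrFun₂ h (0, 1) (0, 1)
  have E₂ := congrFun₂ h (0, 1) (1, 0)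
  simp only [pow_two, Matrix.mul_apply, Fintype.sum_prod_type, Fin.sum_univ_two, Rt, Fmat, RtE,
    FmatE, Matrix.smul_apply, Matrix.of_apply, smul_eq_mul, Fin.val_zero, Fin.val_one] at E₁ E₂
  norm_num at E₁ E₂
  field_simp at E₁ E₂
  exact ⟨mul_left_cancel₀ hu (by linear_combination E₁),
    mul_left_cancel₀ hu (by linear_combination E₂)⟩

theorem Fmat_corners_of_braid (hs : s ≠ 0) (ht : s ^ 2 ≠ 1)
    (h : lift12 (Rt s) * lift23 (Rt s) * lift12 (Fmat a b c d e f) =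
      lift23 (Fmat a b c d e f) * lift12 (Rt s) * lift23 (Rt s)) :
    a = e + c * s ^ 2 ∧ f = b - c * s ^ 2 := by
  have hu : 1 - s ^ 2 ≠ 0 := sub_ne_zero.mpr ht.symm
  have E₁ := congrFun₂ h (1, 0, 0) (1, 0, 0)
  have E₂ := congrFun₂ h (1, 0, 1) (1, 1, 0)
  simp only [Matrix.mul_apply, Fintype.sum_prod_type, Fin.sum_univ_two, Rt, Fmat, lift12, lift23,
    RtE, FmatE, Matrix.smul_apply, Matrix.of_apply, smul_eq_mul, Fin.val_zero, Fin.val_one] at E₁ E₂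
  norm_num at E₁ E₂
  field_simp at E₁ E₂
  exact ⟨by linear_combination -E₁, by linear_combination E₂⟩

end Relations

theorem sV_ne_zero : sV ≠ 0 := by
  simp [sV, map_ne_zero_iff _ (IsFractionRing.injective (MvPolynomial (Fin 1) ℚ) K4)]

theorem sV_sq_ne_one : sV ^ 2 ≠ 1 := by
  intro h
  have hX : (MvPolynomial.X 0 ^ 2 : MvPolynomial (Fin 1) ℚ) = 1 :=
    IsFractionRing.injective _ K4 (by simpa [sV] using h)
  simpa using congrArg MvPolynomial.constantCoeff hX

/-- any degree-preserving `F ∈ End(Y⊗Y)` satisfying the two closure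
equations for the Alexander R-matrix satisfies `a = b+c`, `d = ct`, `e = b+c(1-t)`,
`f = b-ct`, where `t = s^2`. -/
theorem alexander_P2_relations (a b c d e f : K4)
    (h1 : Rt sV ^ 2 * Fmat a b c d e f = Fmat a b c d e f * Rt sV ^ 2)
    (h2 : lift12 (Rt sV) * lift23 (Rt sV) * lift12 (Fmat a b c d e f) =
      lift23 (Fmat a b c d e f) * lift12 (Rt sV) * lift23 (Rt sV)) :
    a = b + c ∧ d = c * sV ^ 2 ∧ e = b + c * (1 - sV ^ 2) ∧ f = b - c * sV ^ 2 := by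
  obtain ⟨hd, he⟩ := Fmat_middle_of_commute_Rt_sq sV_ne_zero sV_sq_ne_one h1
  obtain ⟨ha, hf⟩ := Fmat_corners_of_braid sV_ne_zero sV_sq_ne_one h2
  exact ⟨by rw [ha, he]; ring, hd, he, hf⟩
end
end

section
/- For the V₁ R-matrix R_r with r ∈ {1,−1} and h = diag(−1,1,1,−1), the partial trace identities tr₂((id⊗h)∘R_r^{±1}) = id_W hold; moreover, if h = diag(a,b,c,d) is any diagonal matrix such that tr₂((id⊗h)∘R_r) = id_W and tr₂((id⊗h)∘R_r^{-1}) = id_W, then (a,b,c,d) = (−1,1,1,−1). -/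
open Matrix Kronecker

noncomputable section

variable {K : Type*} [Field K]

/-- The rigid R-matrix `R_r` of the `V₁`-polynomial, in the basis `(e_i ⊗ e_j)` of `W ⊗ W` (entry function: row pair `(k,l)` then column pair `(i,j)`, 0-based). -/
def RV1E (t0 t1 r : K) : ℕ → ℕ → ℕ → ℕ → K
  | 0, 0, 0, 0 => -1
  | 0, 1, 1, 0 => -1
  | 1, 0, 0, 1 => -t0
  | 1, 0, 1, 0 => t0 - 1
  | 0, 2, 2, 0 => -1
  | 2, 0, 0, 2 => -t1
  | 2, 0, 2, 0 => t1 - 1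
  | 1, 1, 1, 1 => t0
  | 2, 2, 2, 2 => t1
  | 0, 3, 3, 0 => -1
  | 1, 2, 2, 1 => -(r⁻¹ * t1⁻¹)
  | 1, 2, 3, 0 => t1⁻¹ - 1
  | 2, 1, 1, 2 => -(r * t1)
  | 2, 1, 3, 0 => r * (t1 - 1)
  | 3, 0, 0, 3 => -(t0 * t1)
  | 3, 0, 1, 2 => t1 * (t0 - 1)
  | 3, 0, 2, 1 => (1 - t0) * r⁻¹
  | 3, 0, 3, 0 => t0 + t1 - 2
  | 1, 3, 3, 1 => r⁻¹ * t1⁻¹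
  | 3, 1, 1, 3 => r * t0 * t1
  | 3, 1, 3, 1 => t0 - 1
  | 2, 3, 3, 2 => r * t1
  | 3, 2, 2, 3 => r⁻¹
  | 3, 2, 3, 2 => t1 - 1
  | 3, 3, 3, 3 => -1
  | _, _, _, _ => 0

/-- The rigid R-matrix `R_r` of the `V₁`-polynomial, in the basis `(e_i ⊗ e_j)` of `W ⊗ W`. -/
def RV1 (t0 t1 r : K) : Matrix (Fin 4 × Fin 4) (Fin 4 × Fin 4) K :=
  Matrix.of fun p q => RV1E t0 t1 r p.1.val p.2.val q.1.val q.2.val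

/-- Explicit inverse of `RV1`. -/
def SV1E (t0 t1 r : K) : ℕ → ℕ → ℕ → ℕ → K
  | 0, 0, 0, 0 => -1
  | 1, 1, 1, 1 => t0⁻¹
  | 2, 2, 2, 2 => t1⁻¹
  | 3, 3, 3, 3 => -1
  | 0, 1, 0, 1 => t0⁻¹ - 1
  | 0, 1, 1, 0 => -t0⁻¹
  | 1, 0, 0, 1 => -1
  | 0, 2, 0, 2 => t1⁻¹ - 1
  | 0, 2, 2, 0 => -t1⁻¹
  | 2, 0, 0, 2 => -1
  | 1, 3, 1, 3 => t0⁻¹ - 1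
  | 1, 3, 3, 1 => r⁻¹ * t0⁻¹ * t1⁻¹
  | 3, 1, 1, 3 => r * t1
  | 2, 3, 2, 3 => t1⁻¹ - 1
  | 2, 3, 3, 2 => r
  | 3, 2, 2, 3 => r⁻¹ * t1⁻¹
  | 0, 3, 0, 3 => t0⁻¹ + t1⁻¹ - 2
  | 0, 3, 1, 2 => 1 - t0⁻¹
  | 0, 3, 2, 1 => (1 - t0) * (r⁻¹ * t0⁻¹ * t1⁻¹)
  | 0, 3, 3, 0 => -(t0⁻¹ * t1⁻¹)
  | 1, 2, 0, 3 => t1⁻¹ - 1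
  | 1, 2, 2, 1 => -(r⁻¹ * t1⁻¹)
  | 2, 1, 0, 3 => r * (t1 - 1)
  | 2, 1, 1, 2 => -(r * t1)
  | 3, 0, 0, 3 => -1
  | _, _, _, _ => 0

def SV1 (t0 t1 r : K) : Matrix (Fin 4 × Fin 4) (Fin 4 × Fin 4) K :=
  Matrix.of fun p q => SV1E t0 t1 r p.1.val p.2.val q.1.val q.2.val

@[simp] lemma Rv0000 (t0 t1 r : K) : RV1E t0 t1 r 0 0 0 0 = -1 := rfl
@[simp] lemma Rv0001 (t0 t1 r : K) : RV1E t0 t1 r 0 0 0 1 = 0 := rfl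
@[simp] lemma Rv0002 (t0 t1 r : K) : RV1E t0 t1 r 0 0 0 2 = 0 := rfl
@[simp] lemma Rv0003 (t0 t1 r : K) : RV1E t0 t1 r 0 0 0 3 = 0 := rfl
@[simp] lemma Rv0010 (t0 t1 r : K) : RV1E t0 t1 r 0 0 1 0 = 0 := rfl
@[simp] lemma Rv0011 (t0 t1 r : K) : RV1E t0 t1 r 0 0 1 1 = 0 := rfl
@[simp] lemma Rv0012 (t0 t1 r : K) : RV1E t0 t1 r 0 0 1 2 = 0 := rfl
@[simp] lemma Rv0013 (t0 t1 r : K) : RV1E t0 t1 r 0 0 1 3 = 0 := rfl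
@[simp] lemma Rv0020 (t0 t1 r : K) : RV1E t0 t1 r 0 0 2 0 = 0 := rfl
@[simp] lemma Rv0021 (t0 t1 r : K) : RV1E t0 t1 r 0 0 2 1 = 0 := rfl
@[simp] lemma Rv0022 (t0 t1 r : K) : RV1E t0 t1 r 0 0 2 2 = 0 := rfl
@[simp] lemma Rv0023 (t0 t1 r : K) : RV1E t0 t1 r 0 0 2 3 = 0 := rfl
@[simp] lemma Rv0030 (t0 t1 r : K) : RV1E t0 t1 r 0 0 3 0 = 0 := rfl
@[simp] lemma Rv0031 (t0 t1 r : K) : RV1E t0 t1 r 0 0 3 1 = 0 := rfl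
@[simp] lemma Rv0032 (t0 t1 r : K) : RV1E t0 t1 r 0 0 3 2 = 0 := rfl
@[simp] lemma Rv0033 (t0 t1 r : K) : RV1E t0 t1 r 0 0 3 3 = 0 := rfl
@[simp] lemma Rv0100 (t0 t1 r : K) : RV1E t0 t1 r 0 1 0 0 = 0 := rfl
@[simp] lemma Rv0101 (t0 t1 r : K) : RV1E t0 t1 r 0 1 0 1 = 0 := rfl
@[simp] lemma Rv0102 (t0 t1 r : K) : RV1E t0 t1 r 0 1 0 2 = 0 := rfl
@[simp] lemma Rv0103 (t0 t1 r : K) : RV1E t0 t1 r 0 1 0 3 = 0 := rfl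
@[simp] lemma Rv0110 (t0 t1 r : K) : RV1E t0 t1 r 0 1 1 0 = -1 := rfl
@[simp] lemma Rv0111 (t0 t1 r : K) : RV1E t0 t1 r 0 1 1 1 = 0 := rfl
@[simp] lemma Rv0112 (t0 t1 r : K) : RV1E t0 t1 r 0 1 1 2 = 0 := rfl
@[simp] lemma Rv0113 (t0 t1 r : K) : RV1E t0 t1 r 0 1 1 3 = 0 := rfl
@[simp] lemma Rv0120 (t0 t1 r : K) : RV1E t0 t1 r 0 1 2 0 = 0 := rfl
@[simp] lemma Rv0121 (t0 t1 r : K) : RV1E t0 t1 r 0 1 2 1 = 0 := rfl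
@[simp] lemma Rv0122 (t0 t1 r : K) : RV1E t0 t1 r 0 1 2 2 = 0 := rfl
@[simp] lemma Rv0123 (t0 t1 r : K) : RV1E t0 t1 r 0 1 2 3 = 0 := rfl
@[simp] lemma Rv0130 (t0 t1 r : K) : RV1E t0 t1 r 0 1 3 0 = 0 := rfl
@[simp] lemma Rv0131 (t0 t1 r : K) : RV1E t0 t1 r 0 1 3 1 = 0 := rfl
@[simp] lemma Rv0132 (t0 t1 r : K) : RV1E t0 t1 r 0 1 3 2 = 0 := rfl
@[simp] lemma Rv0133 (t0 t1 r : K) : RV1E t0 t1 r 0 1 3 3 = 0 := rfl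
@[simp] lemma Rv0200 (t0 t1 r : K) : RV1E t0 t1 r 0 2 0 0 = 0 := rfl
@[simp] lemma Rv0201 (t0 t1 r : K) : RV1E t0 t1 r 0 2 0 1 = 0 := rfl
@[simp] lemma Rv0202 (t0 t1 r : K) : RV1E t0 t1 r 0 2 0 2 = 0 := rfl
@[simp] lemma Rv0203 (t0 t1 r : K) : RV1E t0 t1 r 0 2 0 3 = 0 := rfl
@[simp] lemma Rv0210 (t0 t1 r : K) : RV1E t0 t1 r 0 2 1 0 = 0 := rfl
@[simp] lemma Rv0211 (t0 t1 r : K) : RV1E t0 t1 r 0 2 1 1 = 0 := rfl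
@[simp] lemma Rv0212 (t0 t1 r : K) : RV1E t0 t1 r 0 2 1 2 = 0 := rfl
@[simp] lemma Rv0213 (t0 t1 r : K) : RV1E t0 t1 r 0 2 1 3 = 0 := rfl
@[simp] lemma Rv0220 (t0 t1 r : K) : RV1E t0 t1 r 0 2 2 0 = -1 := rfl
@[simp] lemma Rv0221 (t0 t1 r : K) : RV1E t0 t1 r 0 2 2 1 = 0 := rfl
@[simp] lemma Rv0222 (t0 t1 r : K) : RV1E t0 t1 r 0 2 2 2 = 0 := rfl
@[simp] lemma Rv0223 (t0 t1 r : K) : RV1E t0 t1 r 0 2 2 3 = 0 := rfl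
@[simp] lemma Rv0230 (t0 t1 r : K) : RV1E t0 t1 r 0 2 3 0 = 0 := rfl
@[simp] lemma Rv0231 (t0 t1 r : K) : RV1E t0 t1 r 0 2 3 1 = 0 := rfl
@[simp] lemma Rv0232 (t0 t1 r : K) : RV1E t0 t1 r 0 2 3 2 = 0 := rfl
@[simp] lemma Rv0233 (t0 t1 r : K) : RV1E t0 t1 r 0 2 3 3 = 0 := rfl
@[simp] lemma Rv0300 (t0 t1 r : K) : RV1E t0 t1 r 0 3 0 0 = 0 := rfl
@[simp] lemma Rv0301 (t0 t1 r : K) : RV1E t0 t1 r 0 3 0 1 = 0 := rfl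
@[simp] lemma Rv0302 (t0 t1 r : K) : RV1E t0 t1 r 0 3 0 2 = 0 := rfl
@[simp] lemma Rv0303 (t0 t1 r : K) : RV1E t0 t1 r 0 3 0 3 = 0 := rfl
@[simp] lemma Rv0310 (t0 t1 r : K) : RV1E t0 t1 r 0 3 1 0 = 0 := rfl
@[simp] lemma Rv0311 (t0 t1 r : K) : RV1E t0 t1 r 0 3 1 1 = 0 := rfl
@[simp] lemma Rv0312 (t0 t1 r : K) : RV1E t0 t1 r 0 3 1 2 = 0 := rfl
@[simp] lemma Rv0313 (t0 t1 r : K) : RV1E t0 t1 r 0 3 1 3 = 0 := rfl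
@[simp] lemma Rv0320 (t0 t1 r : K) : RV1E t0 t1 r 0 3 2 0 = 0 := rfl
@[simp] lemma Rv0321 (t0 t1 r : K) : RV1E t0 t1 r 0 3 2 1 = 0 := rfl
@[simp] lemma Rv0322 (t0 t1 r : K) : RV1E t0 t1 r 0 3 2 2 = 0 := rfl
@[simp] lemma Rv0323 (t0 t1 r : K) : RV1E t0 t1 r 0 3 2 3 = 0 := rfl
@[simp] lemma Rv0330 (t0 t1 r : K) : RV1E t0 t1 r 0 3 3 0 = -1 := rfl
@[simp] lemma Rv0331 (t0 t1 r : K) : RV1E t0 t1 r 0 3 3 1 = 0 := rfl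
@[simp] lemma Rv0332 (t0 t1 r : K) : RV1E t0 t1 r 0 3 3 2 = 0 := rfl
@[simp] lemma Rv0333 (t0 t1 r : K) : RV1E t0 t1 r 0 3 3 3 = 0 := rfl
@[simp] lemma Rv1000 (t0 t1 r : K) : RV1E t0 t1 r 1 0 0 0 = 0 := rfl
@[simp] lemma Rv1001 (t0 t1 r : K) : RV1E t0 t1 r 1 0 0 1 = -t0 := rfl
@[simp] lemma Rv1002 (t0 t1 r : K) : RV1E t0 t1 r 1 0 0 2 = 0 := rfl
@[simp] lemma Rv1003 (t0 t1 r : K) : RV1E t0 t1 r 1 0 0 3 = 0 := rfl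
@[simp] lemma Rv1010 (t0 t1 r : K) : RV1E t0 t1 r 1 0 1 0 = t0 - 1 := rfl
@[simp] lemma Rv1011 (t0 t1 r : K) : RV1E t0 t1 r 1 0 1 1 = 0 := rfl
@[simp] lemma Rv1012 (t0 t1 r : K) : RV1E t0 t1 r 1 0 1 2 = 0 := rfl
@[simp] lemma Rv1013 (t0 t1 r : K) : RV1E t0 t1 r 1 0 1 3 = 0 := rfl
@[simp] lemma Rv1020 (t0 t1 r : K) : RV1E t0 t1 r 1 0 2 0 = 0 := rfl
@[simp] lemma Rv1021 (t0 t1 r : K) : RV1E t0 t1 r 1 0 2 1 = 0 := rfl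
@[simp] lemma Rv1022 (t0 t1 r : K) : RV1E t0 t1 r 1 0 2 2 = 0 := rfl
@[simp] lemma Rv1023 (t0 t1 r : K) : RV1E t0 t1 r 1 0 2 3 = 0 := rfl
@[simp] lemma Rv1030 (t0 t1 r : K) : RV1E t0 t1 r 1 0 3 0 = 0 := rfl
@[simp] lemma Rv1031 (t0 t1 r : K) : RV1E t0 t1 r 1 0 3 1 = 0 := rfl
@[simp] lemma Rv1032 (t0 t1 r : K) : RV1E t0 t1 r 1 0 3 2 = 0 := rfl
@[simp] lemma Rv1033 (t0 t1 r : K) : RV1E t0 t1 r 1 0 3 3 = 0 := rfl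
@[simp] lemma Rv1100 (t0 t1 r : K) : RV1E t0 t1 r 1 1 0 0 = 0 := rfl
@[simp] lemma Rv1101 (t0 t1 r : K) : RV1E t0 t1 r 1 1 0 1 = 0 := rfl
@[simp] lemma Rv1102 (t0 t1 r : K) : RV1E t0 t1 r 1 1 0 2 = 0 := rfl
@[simp] lemma Rv1103 (t0 t1 r : K) : RV1E t0 t1 r 1 1 0 3 = 0 := rfl
@[simp] lemma Rv1110 (t0 t1 r : K) : RV1E t0 t1 r 1 1 1 0 = 0 := rfl
@[simp] lemma Rv1111 (t0 t1 r : K) : RV1E t0 t1 r 1 1 1 1 = t0 := rfl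
@[simp] lemma Rv1112 (t0 t1 r : K) : RV1E t0 t1 r 1 1 1 2 = 0 := rfl
@[simp] lemma Rv1113 (t0 t1 r : K) : RV1E t0 t1 r 1 1 1 3 = 0 := rfl
@[simp] lemma Rv1120 (t0 t1 r : K) : RV1E t0 t1 r 1 1 2 0 = 0 := rfl
@[simp] lemma Rv1121 (t0 t1 r : K) : RV1E t0 t1 r 1 1 2 1 = 0 := rfl
@[simp] lemma Rv1122 (t0 t1 r : K) : RV1E t0 t1 r 1 1 2 2 = 0 := rfl
@[simp] lemma Rv1123 (t0 t1 r : K) : RV1E t0 t1 r 1 1 2 3 = 0 := rfl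
@[simp] lemma Rv1130 (t0 t1 r : K) : RV1E t0 t1 r 1 1 3 0 = 0 := rfl
@[simp] lemma Rv1131 (t0 t1 r : K) : RV1E t0 t1 r 1 1 3 1 = 0 := rfl
@[simp] lemma Rv1132 (t0 t1 r : K) : RV1E t0 t1 r 1 1 3 2 = 0 := rfl
@[simp] lemma Rv1133 (t0 t1 r : K) : RV1E t0 t1 r 1 1 3 3 = 0 := rfl
@[simp] lemma Rv1200 (t0 t1 r : K) : RV1E t0 t1 r 1 2 0 0 = 0 := rfl
@[simp] lemma Rv1201 (t0 t1 r : K) : RV1E t0 t1 r 1 2 0 1 = 0 := rfl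
@[simp] lemma Rv1202 (t0 t1 r : K) : RV1E t0 t1 r 1 2 0 2 = 0 := rfl
@[simp] lemma Rv1203 (t0 t1 r : K) : RV1E t0 t1 r 1 2 0 3 = 0 := rfl
@[simp] lemma Rv1210 (t0 t1 r : K) : RV1E t0 t1 r 1 2 1 0 = 0 := rfl
@[simp] lemma Rv1211 (t0 t1 r : K) : RV1E t0 t1 r 1 2 1 1 = 0 := rfl
@[simp] lemma Rv1212 (t0 t1 r : K) : RV1E t0 t1 r 1 2 1 2 = 0 := rfl
@[simp] lemma Rv1213 (t0 t1 r : K) : RV1E t0 t1 r 1 2 1 3 = 0 := rfl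
@[simp] lemma Rv1220 (t0 t1 r : K) : RV1E t0 t1 r 1 2 2 0 = 0 := rfl
@[simp] lemma Rv1221 (t0 t1 r : K) : RV1E t0 t1 r 1 2 2 1 = -(r⁻¹ * t1⁻¹) := rfl
@[simp] lemma Rv1222 (t0 t1 r : K) : RV1E t0 t1 r 1 2 2 2 = 0 := rfl
@[simp] lemma Rv1223 (t0 t1 r : K) : RV1E t0 t1 r 1 2 2 3 = 0 := rfl
@[simp] lemma Rv1230 (t0 t1 r : K) : RV1E t0 t1 r 1 2 3 0 = t1⁻¹ - 1 := rfl
@[simp] lemma Rv1231 (t0 t1 r : K) : RV1E t0 t1 r 1 2 3 1 = 0 := rfl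
@[simp] lemma Rv1232 (t0 t1 r : K) : RV1E t0 t1 r 1 2 3 2 = 0 := rfl
@[simp] lemma Rv1233 (t0 t1 r : K) : RV1E t0 t1 r 1 2 3 3 = 0 := rfl
@[simp] lemma Rv1300 (t0 t1 r : K) : RV1E t0 t1 r 1 3 0 0 = 0 := rfl
@[simp] lemma Rv1301 (t0 t1 r : K) : RV1E t0 t1 r 1 3 0 1 = 0 := rfl
@[simp] lemma Rv1302 (t0 t1 r : K) : RV1E t0 t1 r 1 3 0 2 = 0 := rfl
@[simp] lemma Rv1303 (t0 t1 r : K) : RV1E t0 t1 r 1 3 0 3 = 0 := rfl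
@[simp] lemma Rv1310 (t0 t1 r : K) : RV1E t0 t1 r 1 3 1 0 = 0 := rfl
@[simp] lemma Rv1311 (t0 t1 r : K) : RV1E t0 t1 r 1 3 1 1 = 0 := rfl
@[simp] lemma Rv1312 (t0 t1 r : K) : RV1E t0 t1 r 1 3 1 2 = 0 := rfl
@[simp] lemma Rv1313 (t0 t1 r : K) : RV1E t0 t1 r 1 3 1 3 = 0 := rfl
@[simp] lemma Rv1320 (t0 t1 r : K) : RV1E t0 t1 r 1 3 2 0 = 0 := rfl
@[simp] lemma Rv1321 (t0 t1 r : K) : RV1E t0 t1 r 1 3 2 1 = 0 := rfl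
@[simp] lemma Rv1322 (t0 t1 r : K) : RV1E t0 t1 r 1 3 2 2 = 0 := rfl
@[simp] lemma Rv1323 (t0 t1 r : K) : RV1E t0 t1 r 1 3 2 3 = 0 := rfl
@[simp] lemma Rv1330 (t0 t1 r : K) : RV1E t0 t1 r 1 3 3 0 = 0 := rfl
@[simp] lemma Rv1331 (t0 t1 r : K) : RV1E t0 t1 r 1 3 3 1 = r⁻¹ * t1⁻¹ := rfl
@[simp] lemma Rv1332 (t0 t1 r : K) : RV1E t0 t1 r 1 3 3 2 = 0 := rfl
@[simp] lemma Rv1333 (t0 t1 r : K) : RV1E t0 t1 r 1 3 3 3 = 0 := rfl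
@[simp] lemma Rv2000 (t0 t1 r : K) : RV1E t0 t1 r 2 0 0 0 = 0 := rfl
@[simp] lemma Rv2001 (t0 t1 r : K) : RV1E t0 t1 r 2 0 0 1 = 0 := rfl
@[simp] lemma Rv2002 (t0 t1 r : K) : RV1E t0 t1 r 2 0 0 2 = -t1 := rfl
@[simp] lemma Rv2003 (t0 t1 r : K) : RV1E t0 t1 r 2 0 0 3 = 0 := rfl
@[simp] lemma Rv2010 (t0 t1 r : K) : RV1E t0 t1 r 2 0 1 0 = 0 := rfl
@[simp] lemma Rv2011 (t0 t1 r : K) : RV1E t0 t1 r 2 0 1 1 = 0 := rfl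
@[simp] lemma Rv2012 (t0 t1 r : K) : RV1E t0 t1 r 2 0 1 2 = 0 := rfl
@[simp] lemma Rv2013 (t0 t1 r : K) : RV1E t0 t1 r 2 0 1 3 = 0 := rfl
@[simp] lemma Rv2020 (t0 t1 r : K) : RV1E t0 t1 r 2 0 2 0 = t1 - 1 := rfl
@[simp] lemma Rv2021 (t0 t1 r : K) : RV1E t0 t1 r 2 0 2 1 = 0 := rfl
@[simp] lemma Rv2022 (t0 t1 r : K) : RV1E t0 t1 r 2 0 2 2 = 0 := rfl
@[simp] lemma Rv2023 (t0 t1 r : K) : RV1E t0 t1 r 2 0 2 3 = 0 := rfl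
@[simp] lemma Rv2030 (t0 t1 r : K) : RV1E t0 t1 r 2 0 3 0 = 0 := rfl
@[simp] lemma Rv2031 (t0 t1 r : K) : RV1E t0 t1 r 2 0 3 1 = 0 := rfl
@[simp] lemma Rv2032 (t0 t1 r : K) : RV1E t0 t1 r 2 0 3 2 = 0 := rfl
@[simp] lemma Rv2033 (t0 t1 r : K) : RV1E t0 t1 r 2 0 3 3 = 0 := rfl
@[simp] lemma Rv2100 (t0 t1 r : K) : RV1E t0 t1 r 2 1 0 0 = 0 := rfl
@[simp] lemma Rv2101 (t0 t1 r : K) : RV1E t0 t1 r 2 1 0 1 = 0 := rfl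
@[simp] lemma Rv2102 (t0 t1 r : K) : RV1E t0 t1 r 2 1 0 2 = 0 := rfl
@[simp] lemma Rv2103 (t0 t1 r : K) : RV1E t0 t1 r 2 1 0 3 = 0 := rfl
@[simp] lemma Rv2110 (t0 t1 r : K) : RV1E t0 t1 r 2 1 1 0 = 0 := rfl
@[simp] lemma Rv2111 (t0 t1 r : K) : RV1E t0 t1 r 2 1 1 1 = 0 := rfl
@[simp] lemma Rv2112 (t0 t1 r : K) : RV1E t0 t1 r 2 1 1 2 = -(r * t1) := rfl
@[simp] lemma Rv2113 (t0 t1 r : K) : RV1E t0 t1 r 2 1 1 3 = 0 := rfl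
@[simp] lemma Rv2120 (t0 t1 r : K) : RV1E t0 t1 r 2 1 2 0 = 0 := rfl
@[simp] lemma Rv2121 (t0 t1 r : K) : RV1E t0 t1 r 2 1 2 1 = 0 := rfl
@[simp] lemma Rv2122 (t0 t1 r : K) : RV1E t0 t1 r 2 1 2 2 = 0 := rfl
@[simp] lemma Rv2123 (t0 t1 r : K) : RV1E t0 t1 r 2 1 2 3 = 0 := rfl
@[simp] lemma Rv2130 (t0 t1 r : K) : RV1E t0 t1 r 2 1 3 0 = r * (t1 - 1) := rfl
@[simp] lemma Rv2131 (t0 t1 r : K) : RV1E t0 t1 r 2 1 3 1 = 0 := rfl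
@[simp] lemma Rv2132 (t0 t1 r : K) : RV1E t0 t1 r 2 1 3 2 = 0 := rfl
@[simp] lemma Rv2133 (t0 t1 r : K) : RV1E t0 t1 r 2 1 3 3 = 0 := rfl
@[simp] lemma Rv2200 (t0 t1 r : K) : RV1E t0 t1 r 2 2 0 0 = 0 := rfl
@[simp] lemma Rv2201 (t0 t1 r : K) : RV1E t0 t1 r 2 2 0 1 = 0 := rfl
@[simp] lemma Rv2202 (t0 t1 r : K) : RV1E t0 t1 r 2 2 0 2 = 0 := rfl
@[simp] lemma Rv2203 (t0 t1 r : K) : RV1E t0 t1 r 2 2 0 3 = 0 := rfl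
@[simp] lemma Rv2210 (t0 t1 r : K) : RV1E t0 t1 r 2 2 1 0 = 0 := rfl
@[simp] lemma Rv2211 (t0 t1 r : K) : RV1E t0 t1 r 2 2 1 1 = 0 := rfl
@[simp] lemma Rv2212 (t0 t1 r : K) : RV1E t0 t1 r 2 2 1 2 = 0 := rfl
@[simp] lemma Rv2213 (t0 t1 r : K) : RV1E t0 t1 r 2 2 1 3 = 0 := rfl
@[simp] lemma Rv2220 (t0 t1 r : K) : RV1E t0 t1 r 2 2 2 0 = 0 := rfl
@[simp] lemma Rv2221 (t0 t1 r : K) : RV1E t0 t1 r 2 2 2 1 = 0 := rfl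
@[simp] lemma Rv2222 (t0 t1 r : K) : RV1E t0 t1 r 2 2 2 2 = t1 := rfl
@[simp] lemma Rv2223 (t0 t1 r : K) : RV1E t0 t1 r 2 2 2 3 = 0 := rfl
@[simp] lemma Rv2230 (t0 t1 r : K) : RV1E t0 t1 r 2 2 3 0 = 0 := rfl
@[simp] lemma Rv2231 (t0 t1 r : K) : RV1E t0 t1 r 2 2 3 1 = 0 := rfl
@[simp] lemma Rv2232 (t0 t1 r : K) : RV1E t0 t1 r 2 2 3 2 = 0 := rfl
@[simp] lemma Rv2233 (t0 t1 r : K) : RV1E t0 t1 r 2 2 3 3 = 0 := rfl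
@[simp] lemma Rv2300 (t0 t1 r : K) : RV1E t0 t1 r 2 3 0 0 = 0 := rfl
@[simp] lemma Rv2301 (t0 t1 r : K) : RV1E t0 t1 r 2 3 0 1 = 0 := rfl
@[simp] lemma Rv2302 (t0 t1 r : K) : RV1E t0 t1 r 2 3 0 2 = 0 := rfl
@[simp] lemma Rv2303 (t0 t1 r : K) : RV1E t0 t1 r 2 3 0 3 = 0 := rfl
@[simp] lemma Rv2310 (t0 t1 r : K) : RV1E t0 t1 r 2 3 1 0 = 0 := rfl
@[simp] lemma Rv2311 (t0 t1 r : K) : RV1E t0 t1 r 2 3 1 1 = 0 := rfl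
@[simp] lemma Rv2312 (t0 t1 r : K) : RV1E t0 t1 r 2 3 1 2 = 0 := rfl
@[simp] lemma Rv2313 (t0 t1 r : K) : RV1E t0 t1 r 2 3 1 3 = 0 := rfl
@[simp] lemma Rv2320 (t0 t1 r : K) : RV1E t0 t1 r 2 3 2 0 = 0 := rfl
@[simp] lemma Rv2321 (t0 t1 r : K) : RV1E t0 t1 r 2 3 2 1 = 0 := rfl
@[simp] lemma Rv2322 (t0 t1 r : K) : RV1E t0 t1 r 2 3 2 2 = 0 := rfl
@[simp] lemma Rv2323 (t0 t1 r : K) : RV1E t0 t1 r 2 3 2 3 = 0 := rfl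
@[simp] lemma Rv2330 (t0 t1 r : K) : RV1E t0 t1 r 2 3 3 0 = 0 := rfl
@[simp] lemma Rv2331 (t0 t1 r : K) : RV1E t0 t1 r 2 3 3 1 = 0 := rfl
@[simp] lemma Rv2332 (t0 t1 r : K) : RV1E t0 t1 r 2 3 3 2 = r * t1 := rfl
@[simp] lemma Rv2333 (t0 t1 r : K) : RV1E t0 t1 r 2 3 3 3 = 0 := rfl
@[simp] lemma Rv3000 (t0 t1 r : K) : RV1E t0 t1 r 3 0 0 0 = 0 := rfl
@[simp] lemma Rv3001 (t0 t1 r : K) : RV1E t0 t1 r 3 0 0 1 = 0 := rfl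
@[simp] lemma Rv3002 (t0 t1 r : K) : RV1E t0 t1 r 3 0 0 2 = 0 := rfl
@[simp] lemma Rv3003 (t0 t1 r : K) : RV1E t0 t1 r 3 0 0 3 = -(t0 * t1) := rfl
@[simp] lemma Rv3010 (t0 t1 r : K) : RV1E t0 t1 r 3 0 1 0 = 0 := rfl
@[simp] lemma Rv3011 (t0 t1 r : K) : RV1E t0 t1 r 3 0 1 1 = 0 := rfl
@[simp] lemma Rv3012 (t0 t1 r : K) : RV1E t0 t1 r 3 0 1 2 = t1 * (t0 - 1) := rfl
@[simp] lemma Rv3013 (t0 t1 r : K) : RV1E t0 t1 r 3 0 1 3 = 0 := rfl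
@[simp] lemma Rv3020 (t0 t1 r : K) : RV1E t0 t1 r 3 0 2 0 = 0 := rfl
@[simp] lemma Rv3021 (t0 t1 r : K) : RV1E t0 t1 r 3 0 2 1 = (1 - t0) * r⁻¹ := rfl
@[simp] lemma Rv3022 (t0 t1 r : K) : RV1E t0 t1 r 3 0 2 2 = 0 := rfl
@[simp] lemma Rv3023 (t0 t1 r : K) : RV1E t0 t1 r 3 0 2 3 = 0 := rfl
@[simp] lemma Rv3030 (t0 t1 r : K) : RV1E t0 t1 r 3 0 3 0 = t0 + t1 - 2 := rfl
@[simp] lemma Rv3031 (t0 t1 r : K) : RV1E t0 t1 r 3 0 3 1 = 0 := rfl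
@[simp] lemma Rv3032 (t0 t1 r : K) : RV1E t0 t1 r 3 0 3 2 = 0 := rfl
@[simp] lemma Rv3033 (t0 t1 r : K) : RV1E t0 t1 r 3 0 3 3 = 0 := rfl
@[simp] lemma Rv3100 (t0 t1 r : K) : RV1E t0 t1 r 3 1 0 0 = 0 := rfl
@[simp] lemma Rv3101 (t0 t1 r : K) : RV1E t0 t1 r 3 1 0 1 = 0 := rfl
@[simp] lemma Rv3102 (t0 t1 r : K) : RV1E t0 t1 r 3 1 0 2 = 0 := rfl
@[simp] lemma Rv3103 (t0 t1 r : K) : RV1E t0 t1 r 3 1 0 3 = 0 := rfl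
@[simp] lemma Rv3110 (t0 t1 r : K) : RV1E t0 t1 r 3 1 1 0 = 0 := rfl
@[simp] lemma Rv3111 (t0 t1 r : K) : RV1E t0 t1 r 3 1 1 1 = 0 := rfl
@[simp] lemma Rv3112 (t0 t1 r : K) : RV1E t0 t1 r 3 1 1 2 = 0 := rfl
@[simp] lemma Rv3113 (t0 t1 r : K) : RV1E t0 t1 r 3 1 1 3 = r * t0 * t1 := rfl
@[simp] lemma Rv3120 (t0 t1 r : K) : RV1E t0 t1 r 3 1 2 0 = 0 := rfl
@[simp] lemma Rv3121 (t0 t1 r : K) : RV1E t0 t1 r 3 1 2 1 = 0 := rfl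
@[simp] lemma Rv3122 (t0 t1 r : K) : RV1E t0 t1 r 3 1 2 2 = 0 := rfl
@[simp] lemma Rv3123 (t0 t1 r : K) : RV1E t0 t1 r 3 1 2 3 = 0 := rfl
@[simp] lemma Rv3130 (t0 t1 r : K) : RV1E t0 t1 r 3 1 3 0 = 0 := rfl
@[simp] lemma Rv3131 (t0 t1 r : K) : RV1E t0 t1 r 3 1 3 1 = t0 - 1 := rfl
@[simp] lemma Rv3132 (t0 t1 r : K) : RV1E t0 t1 r 3 1 3 2 = 0 := rfl
@[simp] lemma Rv3133 (t0 t1 r : K) : RV1E t0 t1 r 3 1 3 3 = 0 := rfl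
@[simp] lemma Rv3200 (t0 t1 r : K) : RV1E t0 t1 r 3 2 0 0 = 0 := rfl
@[simp] lemma Rv3201 (t0 t1 r : K) : RV1E t0 t1 r 3 2 0 1 = 0 := rfl
@[simp] lemma Rv3202 (t0 t1 r : K) : RV1E t0 t1 r 3 2 0 2 = 0 := rfl
@[simp] lemma Rv3203 (t0 t1 r : K) : RV1E t0 t1 r 3 2 0 3 = 0 := rfl
@[simp] lemma Rv3210 (t0 t1 r : K) : RV1E t0 t1 r 3 2 1 0 = 0 := rfl
@[simp] lemma Rv3211 (t0 t1 r : K) : RV1E t0 t1 r 3 2 1 1 = 0 := rfl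
@[simp] lemma Rv3212 (t0 t1 r : K) : RV1E t0 t1 r 3 2 1 2 = 0 := rfl
@[simp] lemma Rv3213 (t0 t1 r : K) : RV1E t0 t1 r 3 2 1 3 = 0 := rfl
@[simp] lemma Rv3220 (t0 t1 r : K) : RV1E t0 t1 r 3 2 2 0 = 0 := rfl
@[simp] lemma Rv3221 (t0 t1 r : K) : RV1E t0 t1 r 3 2 2 1 = 0 := rfl
@[simp] lemma Rv3222 (t0 t1 r : K) : RV1E t0 t1 r 3 2 2 2 = 0 := rfl
@[simp] lemma Rv3223 (t0 t1 r : K) : RV1E t0 t1 r 3 2 2 3 = r⁻¹ := rfl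
@[simp] lemma Rv3230 (t0 t1 r : K) : RV1E t0 t1 r 3 2 3 0 = 0 := rfl
@[simp] lemma Rv3231 (t0 t1 r : K) : RV1E t0 t1 r 3 2 3 1 = 0 := rfl
@[simp] lemma Rv3232 (t0 t1 r : K) : RV1E t0 t1 r 3 2 3 2 = t1 - 1 := rfl
@[simp] lemma Rv3233 (t0 t1 r : K) : RV1E t0 t1 r 3 2 3 3 = 0 := rfl
@[simp] lemma Rv3300 (t0 t1 r : K) : RV1E t0 t1 r 3 3 0 0 = 0 := rfl
@[simp] lemma Rv3301 (t0 t1 r : K) : RV1E t0 t1 r 3 3 0 1 = 0 := rfl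
@[simp] lemma Rv3302 (t0 t1 r : K) : RV1E t0 t1 r 3 3 0 2 = 0 := rfl
@[simp] lemma Rv3303 (t0 t1 r : K) : RV1E t0 t1 r 3 3 0 3 = 0 := rfl
@[simp] lemma Rv3310 (t0 t1 r : K) : RV1E t0 t1 r 3 3 1 0 = 0 := rfl
@[simp] lemma Rv3311 (t0 t1 r : K) : RV1E t0 t1 r 3 3 1 1 = 0 := rfl
@[simp] lemma Rv3312 (t0 t1 r : K) : RV1E t0 t1 r 3 3 1 2 = 0 := rfl
@[simp] lemma Rv3313 (t0 t1 r : K) : RV1E t0 t1 r 3 3 1 3 = 0 := rfl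
@[simp] lemma Rv3320 (t0 t1 r : K) : RV1E t0 t1 r 3 3 2 0 = 0 := rfl
@[simp] lemma Rv3321 (t0 t1 r : K) : RV1E t0 t1 r 3 3 2 1 = 0 := rfl
@[simp] lemma Rv3322 (t0 t1 r : K) : RV1E t0 t1 r 3 3 2 2 = 0 := rfl
@[simp] lemma Rv3323 (t0 t1 r : K) : RV1E t0 t1 r 3 3 2 3 = 0 := rfl
@[simp] lemma Rv3330 (t0 t1 r : K) : RV1E t0 t1 r 3 3 3 0 = 0 := rfl
@[simp] lemma Rv3331 (t0 t1 r : K) : RV1E t0 t1 r 3 3 3 1 = 0 := rfl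
@[simp] lemma Rv3332 (t0 t1 r : K) : RV1E t0 t1 r 3 3 3 2 = 0 := rfl
@[simp] lemma Rv3333 (t0 t1 r : K) : RV1E t0 t1 r 3 3 3 3 = -1 := rfl
@[simp] lemma Sv0000 (t0 t1 r : K) : SV1E t0 t1 r 0 0 0 0 = -1 := rfl
@[simp] lemma Sv0001 (t0 t1 r : K) : SV1E t0 t1 r 0 0 0 1 = 0 := rfl
@[simp] lemma Sv0002 (t0 t1 r : K) : SV1E t0 t1 r 0 0 0 2 = 0 := rfl
@[simp] lemma Sv0003 (t0 t1 r : K) : SV1E t0 t1 r 0 0 0 3 = 0 := rfl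
@[simp] lemma Sv0010 (t0 t1 r : K) : SV1E t0 t1 r 0 0 1 0 = 0 := rfl
@[simp] lemma Sv0011 (t0 t1 r : K) : SV1E t0 t1 r 0 0 1 1 = 0 := rfl
@[simp] lemma Sv0012 (t0 t1 r : K) : SV1E t0 t1 r 0 0 1 2 = 0 := rfl
@[simp] lemma Sv0013 (t0 t1 r : K) : SV1E t0 t1 r 0 0 1 3 = 0 := rfl
@[simp] lemma Sv0020 (t0 t1 r : K) : SV1E t0 t1 r 0 0 2 0 = 0 := rfl
@[simp] lemma Sv0021 (t0 t1 r : K) : SV1E t0 t1 r 0 0 2 1 = 0 := rfl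
@[simp] lemma Sv0022 (t0 t1 r : K) : SV1E t0 t1 r 0 0 2 2 = 0 := rfl
@[simp] lemma Sv0023 (t0 t1 r : K) : SV1E t0 t1 r 0 0 2 3 = 0 := rfl
@[simp] lemma Sv0030 (t0 t1 r : K) : SV1E t0 t1 r 0 0 3 0 = 0 := rfl
@[simp] lemma Sv0031 (t0 t1 r : K) : SV1E t0 t1 r 0 0 3 1 = 0 := rfl
@[simp] lemma Sv0032 (t0 t1 r : K) : SV1E t0 t1 r 0 0 3 2 = 0 := rfl
@[simp] lemma Sv0033 (t0 t1 r : K) : SV1E t0 t1 r 0 0 3 3 = 0 := rfl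
@[simp] lemma Sv0100 (t0 t1 r : K) : SV1E t0 t1 r 0 1 0 0 = 0 := rfl
@[simp] lemma Sv0101 (t0 t1 r : K) : SV1E t0 t1 r 0 1 0 1 = t0⁻¹ - 1 := rfl
@[simp] lemma Sv0102 (t0 t1 r : K) : SV1E t0 t1 r 0 1 0 2 = 0 := rfl
@[simp] lemma Sv0103 (t0 t1 r : K) : SV1E t0 t1 r 0 1 0 3 = 0 := rfl
@[simp] lemma Sv0110 (t0 t1 r : K) : SV1E t0 t1 r 0 1 1 0 = -t0⁻¹ := rfl
@[simp] lemma Sv0111 (t0 t1 r : K) : SV1E t0 t1 r 0 1 1 1 = 0 := rfl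
@[simp] lemma Sv0112 (t0 t1 r : K) : SV1E t0 t1 r 0 1 1 2 = 0 := rfl
@[simp] lemma Sv0113 (t0 t1 r : K) : SV1E t0 t1 r 0 1 1 3 = 0 := rfl
@[simp] lemma Sv0120 (t0 t1 r : K) : SV1E t0 t1 r 0 1 2 0 = 0 := rfl
@[simp] lemma Sv0121 (t0 t1 r : K) : SV1E t0 t1 r 0 1 2 1 = 0 := rfl
@[simp] lemma Sv0122 (t0 t1 r : K) : SV1E t0 t1 r 0 1 2 2 = 0 := rfl
@[simp] lemma Sv0123 (t0 t1 r : K) : SV1E t0 t1 r 0 1 2 3 = 0 := rfl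
@[simp] lemma Sv0130 (t0 t1 r : K) : SV1E t0 t1 r 0 1 3 0 = 0 := rfl
@[simp] lemma Sv0131 (t0 t1 r : K) : SV1E t0 t1 r 0 1 3 1 = 0 := rfl
@[simp] lemma Sv0132 (t0 t1 r : K) : SV1E t0 t1 r 0 1 3 2 = 0 := rfl
@[simp] lemma Sv0133 (t0 t1 r : K) : SV1E t0 t1 r 0 1 3 3 = 0 := rfl
@[simp] lemma Sv0200 (t0 t1 r : K) : SV1E t0 t1 r 0 2 0 0 = 0 := rfl
@[simp] lemma Sv0201 (t0 t1 r : K) : SV1E t0 t1 r 0 2 0 1 = 0 := rfl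
@[simp] lemma Sv0202 (t0 t1 r : K) : SV1E t0 t1 r 0 2 0 2 = t1⁻¹ - 1 := rfl
@[simp] lemma Sv0203 (t0 t1 r : K) : SV1E t0 t1 r 0 2 0 3 = 0 := rfl
@[simp] lemma Sv0210 (t0 t1 r : K) : SV1E t0 t1 r 0 2 1 0 = 0 := rfl
@[simp] lemma Sv0211 (t0 t1 r : K) : SV1E t0 t1 r 0 2 1 1 = 0 := rfl
@[simp] lemma Sv0212 (t0 t1 r : K) : SV1E t0 t1 r 0 2 1 2 = 0 := rfl
@[simp] lemma Sv0213 (t0 t1 r : K) : SV1E t0 t1 r 0 2 1 3 = 0 := rfl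
@[simp] lemma Sv0220 (t0 t1 r : K) : SV1E t0 t1 r 0 2 2 0 = -t1⁻¹ := rfl
@[simp] lemma Sv0221 (t0 t1 r : K) : SV1E t0 t1 r 0 2 2 1 = 0 := rfl
@[simp] lemma Sv0222 (t0 t1 r : K) : SV1E t0 t1 r 0 2 2 2 = 0 := rfl
@[simp] lemma Sv0223 (t0 t1 r : K) : SV1E t0 t1 r 0 2 2 3 = 0 := rfl
@[simp] lemma Sv0230 (t0 t1 r : K) : SV1E t0 t1 r 0 2 3 0 = 0 := rfl
@[simp] lemma Sv0231 (t0 t1 r : K) : SV1E t0 t1 r 0 2 3 1 = 0 := rfl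
@[simp] lemma Sv0232 (t0 t1 r : K) : SV1E t0 t1 r 0 2 3 2 = 0 := rfl
@[simp] lemma Sv0233 (t0 t1 r : K) : SV1E t0 t1 r 0 2 3 3 = 0 := rfl
@[simp] lemma Sv0300 (t0 t1 r : K) : SV1E t0 t1 r 0 3 0 0 = 0 := rfl
@[simp] lemma Sv0301 (t0 t1 r : K) : SV1E t0 t1 r 0 3 0 1 = 0 := rfl
@[simp] lemma Sv0302 (t0 t1 r : K) : SV1E t0 t1 r 0 3 0 2 = 0 := rfl
@[simp] lemma Sv0303 (t0 t1 r : K) : SV1E t0 t1 r 0 3 0 3 = t0⁻¹ + t1⁻¹ - 2 := rfl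
@[simp] lemma Sv0310 (t0 t1 r : K) : SV1E t0 t1 r 0 3 1 0 = 0 := rfl
@[simp] lemma Sv0311 (t0 t1 r : K) : SV1E t0 t1 r 0 3 1 1 = 0 := rfl
@[simp] lemma Sv0312 (t0 t1 r : K) : SV1E t0 t1 r 0 3 1 2 = 1 - t0⁻¹ := rfl
@[simp] lemma Sv0313 (t0 t1 r : K) : SV1E t0 t1 r 0 3 1 3 = 0 := rfl
@[simp] lemma Sv0320 (t0 t1 r : K) : SV1E t0 t1 r 0 3 2 0 = 0 := rfl
@[simp] lemma Sv0321 (t0 t1 r : K) : SV1E t0 t1 r 0 3 2 1 = (1 - t0) * (r⁻¹ * t0⁻¹ * t1⁻¹) := rfl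
@[simp] lemma Sv0322 (t0 t1 r : K) : SV1E t0 t1 r 0 3 2 2 = 0 := rfl
@[simp] lemma Sv0323 (t0 t1 r : K) : SV1E t0 t1 r 0 3 2 3 = 0 := rfl
@[simp] lemma Sv0330 (t0 t1 r : K) : SV1E t0 t1 r 0 3 3 0 = -(t0⁻¹ * t1⁻¹) := rfl
@[simp] lemma Sv0331 (t0 t1 r : K) : SV1E t0 t1 r 0 3 3 1 = 0 := rfl
@[simp] lemma Sv0332 (t0 t1 r : K) : SV1E t0 t1 r 0 3 3 2 = 0 := rfl
@[simp] lemma Sv0333 (t0 t1 r : K) : SV1E t0 t1 r 0 3 3 3 = 0 := rfl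
@[simp] lemma Sv1000 (t0 t1 r : K) : SV1E t0 t1 r 1 0 0 0 = 0 := rfl
@[simp] lemma Sv1001 (t0 t1 r : K) : SV1E t0 t1 r 1 0 0 1 = -1 := rfl
@[simp] lemma Sv1002 (t0 t1 r : K) : SV1E t0 t1 r 1 0 0 2 = 0 := rfl
@[simp] lemma Sv1003 (t0 t1 r : K) : SV1E t0 t1 r 1 0 0 3 = 0 := rfl
@[simp] lemma Sv1010 (t0 t1 r : K) : SV1E t0 t1 r 1 0 1 0 = 0 := rfl
@[simp] lemma Sv1011 (t0 t1 r : K) : SV1E t0 t1 r 1 0 1 1 = 0 := rfl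
@[simp] lemma Sv1012 (t0 t1 r : K) : SV1E t0 t1 r 1 0 1 2 = 0 := rfl
@[simp] lemma Sv1013 (t0 t1 r : K) : SV1E t0 t1 r 1 0 1 3 = 0 := rfl
@[simp] lemma Sv1020 (t0 t1 r : K) : SV1E t0 t1 r 1 0 2 0 = 0 := rfl
@[simp] lemma Sv1021 (t0 t1 r : K) : SV1E t0 t1 r 1 0 2 1 = 0 := rfl
@[simp] lemma Sv1022 (t0 t1 r : K) : SV1E t0 t1 r 1 0 2 2 = 0 := rfl
@[simp] lemma Sv1023 (t0 t1 r : K) : SV1E t0 t1 r 1 0 2 3 = 0 := rfl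
@[simp] lemma Sv1030 (t0 t1 r : K) : SV1E t0 t1 r 1 0 3 0 = 0 := rfl
@[simp] lemma Sv1031 (t0 t1 r : K) : SV1E t0 t1 r 1 0 3 1 = 0 := rfl
@[simp] lemma Sv1032 (t0 t1 r : K) : SV1E t0 t1 r 1 0 3 2 = 0 := rfl
@[simp] lemma Sv1033 (t0 t1 r : K) : SV1E t0 t1 r 1 0 3 3 = 0 := rfl
@[simp] lemma Sv1100 (t0 t1 r : K) : SV1E t0 t1 r 1 1 0 0 = 0 := rfl
@[simp] lemma Sv1101 (t0 t1 r : K) : SV1E t0 t1 r 1 1 0 1 = 0 := rfl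
@[simp] lemma Sv1102 (t0 t1 r : K) : SV1E t0 t1 r 1 1 0 2 = 0 := rfl
@[simp] lemma Sv1103 (t0 t1 r : K) : SV1E t0 t1 r 1 1 0 3 = 0 := rfl
@[simp] lemma Sv1110 (t0 t1 r : K) : SV1E t0 t1 r 1 1 1 0 = 0 := rfl
@[simp] lemma Sv1111 (t0 t1 r : K) : SV1E t0 t1 r 1 1 1 1 = t0⁻¹ := rfl
@[simp] lemma Sv1112 (t0 t1 r : K) : SV1E t0 t1 r 1 1 1 2 = 0 := rfl
@[simp] lemma Sv1113 (t0 t1 r : K) : SV1E t0 t1 r 1 1 1 3 = 0 := rfl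
@[simp] lemma Sv1120 (t0 t1 r : K) : SV1E t0 t1 r 1 1 2 0 = 0 := rfl
@[simp] lemma Sv1121 (t0 t1 r : K) : SV1E t0 t1 r 1 1 2 1 = 0 := rfl
@[simp] lemma Sv1122 (t0 t1 r : K) : SV1E t0 t1 r 1 1 2 2 = 0 := rfl
@[simp] lemma Sv1123 (t0 t1 r : K) : SV1E t0 t1 r 1 1 2 3 = 0 := rfl
@[simp] lemma Sv1130 (t0 t1 r : K) : SV1E t0 t1 r 1 1 3 0 = 0 := rfl
@[simp] lemma Sv1131 (t0 t1 r : K) : SV1E t0 t1 r 1 1 3 1 = 0 := rfl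
@[simp] lemma Sv1132 (t0 t1 r : K) : SV1E t0 t1 r 1 1 3 2 = 0 := rfl
@[simp] lemma Sv1133 (t0 t1 r : K) : SV1E t0 t1 r 1 1 3 3 = 0 := rfl
@[simp] lemma Sv1200 (t0 t1 r : K) : SV1E t0 t1 r 1 2 0 0 = 0 := rfl
@[simp] lemma Sv1201 (t0 t1 r : K) : SV1E t0 t1 r 1 2 0 1 = 0 := rfl
@[simp] lemma Sv1202 (t0 t1 r : K) : SV1E t0 t1 r 1 2 0 2 = 0 := rfl
@[simp] lemma Sv1203 (t0 t1 r : K) : SV1E t0 t1 r 1 2 0 3 = t1⁻¹ - 1 := rfl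
@[simp] lemma Sv1210 (t0 t1 r : K) : SV1E t0 t1 r 1 2 1 0 = 0 := rfl
@[simp] lemma Sv1211 (t0 t1 r : K) : SV1E t0 t1 r 1 2 1 1 = 0 := rfl
@[simp] lemma Sv1212 (t0 t1 r : K) : SV1E t0 t1 r 1 2 1 2 = 0 := rfl
@[simp] lemma Sv1213 (t0 t1 r : K) : SV1E t0 t1 r 1 2 1 3 = 0 := rfl
@[simp] lemma Sv1220 (t0 t1 r : K) : SV1E t0 t1 r 1 2 2 0 = 0 := rfl
@[simp] lemma Sv1221 (t0 t1 r : K) : SV1E t0 t1 r 1 2 2 1 = -(r⁻¹ * t1⁻¹) := rfl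
@[simp] lemma Sv1222 (t0 t1 r : K) : SV1E t0 t1 r 1 2 2 2 = 0 := rfl
@[simp] lemma Sv1223 (t0 t1 r : K) : SV1E t0 t1 r 1 2 2 3 = 0 := rfl
@[simp] lemma Sv1230 (t0 t1 r : K) : SV1E t0 t1 r 1 2 3 0 = 0 := rfl
@[simp] lemma Sv1231 (t0 t1 r : K) : SV1E t0 t1 r 1 2 3 1 = 0 := rfl
@[simp] lemma Sv1232 (t0 t1 r : K) : SV1E t0 t1 r 1 2 3 2 = 0 := rfl
@[simp] lemma Sv1233 (t0 t1 r : K) : SV1E t0 t1 r 1 2 3 3 = 0 := rfl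
@[simp] lemma Sv1300 (t0 t1 r : K) : SV1E t0 t1 r 1 3 0 0 = 0 := rfl
@[simp] lemma Sv1301 (t0 t1 r : K) : SV1E t0 t1 r 1 3 0 1 = 0 := rfl
@[simp] lemma Sv1302 (t0 t1 r : K) : SV1E t0 t1 r 1 3 0 2 = 0 := rfl
@[simp] lemma Sv1303 (t0 t1 r : K) : SV1E t0 t1 r 1 3 0 3 = 0 := rfl
@[simp] lemma Sv1310 (t0 t1 r : K) : SV1E t0 t1 r 1 3 1 0 = 0 := rfl
@[simp] lemma Sv1311 (t0 t1 r : K) : SV1E t0 t1 r 1 3 1 1 = 0 := rfl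
@[simp] lemma Sv1312 (t0 t1 r : K) : SV1E t0 t1 r 1 3 1 2 = 0 := rfl
@[simp] lemma Sv1313 (t0 t1 r : K) : SV1E t0 t1 r 1 3 1 3 = t0⁻¹ - 1 := rfl
@[simp] lemma Sv1320 (t0 t1 r : K) : SV1E t0 t1 r 1 3 2 0 = 0 := rfl
@[simp] lemma Sv1321 (t0 t1 r : K) : SV1E t0 t1 r 1 3 2 1 = 0 := rfl
@[simp] lemma Sv1322 (t0 t1 r : K) : SV1E t0 t1 r 1 3 2 2 = 0 := rfl
@[simp] lemma Sv1323 (t0 t1 r : K) : SV1E t0 t1 r 1 3 2 3 = 0 := rfl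
@[simp] lemma Sv1330 (t0 t1 r : K) : SV1E t0 t1 r 1 3 3 0 = 0 := rfl
@[simp] lemma Sv1331 (t0 t1 r : K) : SV1E t0 t1 r 1 3 3 1 = r⁻¹ * t0⁻¹ * t1⁻¹ := rfl
@[simp] lemma Sv1332 (t0 t1 r : K) : SV1E t0 t1 r 1 3 3 2 = 0 := rfl
@[simp] lemma Sv1333 (t0 t1 r : K) : SV1E t0 t1 r 1 3 3 3 = 0 := rfl
@[simp] lemma Sv2000 (t0 t1 r : K) : SV1E t0 t1 r 2 0 0 0 = 0 := rfl
@[simp] lemma Sv2001 (t0 t1 r : K) : SV1E t0 t1 r 2 0 0 1 = 0 := rfl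
@[simp] lemma Sv2002 (t0 t1 r : K) : SV1E t0 t1 r 2 0 0 2 = -1 := rfl
@[simp] lemma Sv2003 (t0 t1 r : K) : SV1E t0 t1 r 2 0 0 3 = 0 := rfl
@[simp] lemma Sv2010 (t0 t1 r : K) : SV1E t0 t1 r 2 0 1 0 = 0 := rfl
@[simp] lemma Sv2011 (t0 t1 r : K) : SV1E t0 t1 r 2 0 1 1 = 0 := rfl
@[simp] lemma Sv2012 (t0 t1 r : K) : SV1E t0 t1 r 2 0 1 2 = 0 := rfl
@[simp] lemma Sv2013 (t0 t1 r : K) : SV1E t0 t1 r 2 0 1 3 = 0 := rfl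
@[simp] lemma Sv2020 (t0 t1 r : K) : SV1E t0 t1 r 2 0 2 0 = 0 := rfl
@[simp] lemma Sv2021 (t0 t1 r : K) : SV1E t0 t1 r 2 0 2 1 = 0 := rfl
@[simp] lemma Sv2022 (t0 t1 r : K) : SV1E t0 t1 r 2 0 2 2 = 0 := rfl
@[simp] lemma Sv2023 (t0 t1 r : K) : SV1E t0 t1 r 2 0 2 3 = 0 := rfl
@[simp] lemma Sv2030 (t0 t1 r : K) : SV1E t0 t1 r 2 0 3 0 = 0 := rfl
@[simp] lemma Sv2031 (t0 t1 r : K) : SV1E t0 t1 r 2 0 3 1 = 0 := rfl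
@[simp] lemma Sv2032 (t0 t1 r : K) : SV1E t0 t1 r 2 0 3 2 = 0 := rfl
@[simp] lemma Sv2033 (t0 t1 r : K) : SV1E t0 t1 r 2 0 3 3 = 0 := rfl
@[simp] lemma Sv2100 (t0 t1 r : K) : SV1E t0 t1 r 2 1 0 0 = 0 := rfl
@[simp] lemma Sv2101 (t0 t1 r : K) : SV1E t0 t1 r 2 1 0 1 = 0 := rfl
@[simp] lemma Sv2102 (t0 t1 r : K) : SV1E t0 t1 r 2 1 0 2 = 0 := rfl
@[simp] lemma Sv2103 (t0 t1 r : K) : SV1E t0 t1 r 2 1 0 3 = r * (t1 - 1) := rfl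
@[simp] lemma Sv2110 (t0 t1 r : K) : SV1E t0 t1 r 2 1 1 0 = 0 := rfl
@[simp] lemma Sv2111 (t0 t1 r : K) : SV1E t0 t1 r 2 1 1 1 = 0 := rfl
@[simp] lemma Sv2112 (t0 t1 r : K) : SV1E t0 t1 r 2 1 1 2 = -(r * t1) := rfl
@[simp] lemma Sv2113 (t0 t1 r : K) : SV1E t0 t1 r 2 1 1 3 = 0 := rfl
@[simp] lemma Sv2120 (t0 t1 r : K) : SV1E t0 t1 r 2 1 2 0 = 0 := rfl
@[simp] lemma Sv2121 (t0 t1 r : K) : SV1E t0 t1 r 2 1 2 1 = 0 := rfl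
@[simp] lemma Sv2122 (t0 t1 r : K) : SV1E t0 t1 r 2 1 2 2 = 0 := rfl
@[simp] lemma Sv2123 (t0 t1 r : K) : SV1E t0 t1 r 2 1 2 3 = 0 := rfl
@[simp] lemma Sv2130 (t0 t1 r : K) : SV1E t0 t1 r 2 1 3 0 = 0 := rfl
@[simp] lemma Sv2131 (t0 t1 r : K) : SV1E t0 t1 r 2 1 3 1 = 0 := rfl
@[simp] lemma Sv2132 (t0 t1 r : K) : SV1E t0 t1 r 2 1 3 2 = 0 := rfl
@[simp] lemma Sv2133 (t0 t1 r : K) : SV1E t0 t1 r 2 1 3 3 = 0 := rfl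
@[simp] lemma Sv2200 (t0 t1 r : K) : SV1E t0 t1 r 2 2 0 0 = 0 := rfl
@[simp] lemma Sv2201 (t0 t1 r : K) : SV1E t0 t1 r 2 2 0 1 = 0 := rfl
@[simp] lemma Sv2202 (t0 t1 r : K) : SV1E t0 t1 r 2 2 0 2 = 0 := rfl
@[simp] lemma Sv2203 (t0 t1 r : K) : SV1E t0 t1 r 2 2 0 3 = 0 := rfl
@[simp] lemma Sv2210 (t0 t1 r : K) : SV1E t0 t1 r 2 2 1 0 = 0 := rfl
@[simp] lemma Sv2211 (t0 t1 r : K) : SV1E t0 t1 r 2 2 1 1 = 0 := rfl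
@[simp] lemma Sv2212 (t0 t1 r : K) : SV1E t0 t1 r 2 2 1 2 = 0 := rfl
@[simp] lemma Sv2213 (t0 t1 r : K) : SV1E t0 t1 r 2 2 1 3 = 0 := rfl
@[simp] lemma Sv2220 (t0 t1 r : K) : SV1E t0 t1 r 2 2 2 0 = 0 := rfl
@[simp] lemma Sv2221 (t0 t1 r : K) : SV1E t0 t1 r 2 2 2 1 = 0 := rfl
@[simp] lemma Sv2222 (t0 t1 r : K) : SV1E t0 t1 r 2 2 2 2 = t1⁻¹ := rfl
@[simp] lemma Sv2223 (t0 t1 r : K) : SV1E t0 t1 r 2 2 2 3 = 0 := rfl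
@[simp] lemma Sv2230 (t0 t1 r : K) : SV1E t0 t1 r 2 2 3 0 = 0 := rfl
@[simp] lemma Sv2231 (t0 t1 r : K) : SV1E t0 t1 r 2 2 3 1 = 0 := rfl
@[simp] lemma Sv2232 (t0 t1 r : K) : SV1E t0 t1 r 2 2 3 2 = 0 := rfl
@[simp] lemma Sv2233 (t0 t1 r : K) : SV1E t0 t1 r 2 2 3 3 = 0 := rfl
@[simp] lemma Sv2300 (t0 t1 r : K) : SV1E t0 t1 r 2 3 0 0 = 0 := rfl
@[simp] lemma Sv2301 (t0 t1 r : K) : SV1E t0 t1 r 2 3 0 1 = 0 := rfl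
@[simp] lemma Sv2302 (t0 t1 r : K) : SV1E t0 t1 r 2 3 0 2 = 0 := rfl
@[simp] lemma Sv2303 (t0 t1 r : K) : SV1E t0 t1 r 2 3 0 3 = 0 := rfl
@[simp] lemma Sv2310 (t0 t1 r : K) : SV1E t0 t1 r 2 3 1 0 = 0 := rfl
@[simp] lemma Sv2311 (t0 t1 r : K) : SV1E t0 t1 r 2 3 1 1 = 0 := rfl
@[simp] lemma Sv2312 (t0 t1 r : K) : SV1E t0 t1 r 2 3 1 2 = 0 := rfl
@[simp] lemma Sv2313 (t0 t1 r : K) : SV1E t0 t1 r 2 3 1 3 = 0 := rfl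
@[simp] lemma Sv2320 (t0 t1 r : K) : SV1E t0 t1 r 2 3 2 0 = 0 := rfl
@[simp] lemma Sv2321 (t0 t1 r : K) : SV1E t0 t1 r 2 3 2 1 = 0 := rfl
@[simp] lemma Sv2322 (t0 t1 r : K) : SV1E t0 t1 r 2 3 2 2 = 0 := rfl
@[simp] lemma Sv2323 (t0 t1 r : K) : SV1E t0 t1 r 2 3 2 3 = t1⁻¹ - 1 := rfl
@[simp] lemma Sv2330 (t0 t1 r : K) : SV1E t0 t1 r 2 3 3 0 = 0 := rfl
@[simp] lemma Sv2331 (t0 t1 r : K) : SV1E t0 t1 r 2 3 3 1 = 0 := rfl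
@[simp] lemma Sv2332 (t0 t1 r : K) : SV1E t0 t1 r 2 3 3 2 = r := rfl
@[simp] lemma Sv2333 (t0 t1 r : K) : SV1E t0 t1 r 2 3 3 3 = 0 := rfl
@[simp] lemma Sv3000 (t0 t1 r : K) : SV1E t0 t1 r 3 0 0 0 = 0 := rfl
@[simp] lemma Sv3001 (t0 t1 r : K) : SV1E t0 t1 r 3 0 0 1 = 0 := rfl
@[simp] lemma Sv3002 (t0 t1 r : K) : SV1E t0 t1 r 3 0 0 2 = 0 := rfl
@[simp] lemma Sv3003 (t0 t1 r : K) : SV1E t0 t1 r 3 0 0 3 = -1 := rfl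
@[simp] lemma Sv3010 (t0 t1 r : K) : SV1E t0 t1 r 3 0 1 0 = 0 := rfl
@[simp] lemma Sv3011 (t0 t1 r : K) : SV1E t0 t1 r 3 0 1 1 = 0 := rfl
@[simp] lemma Sv3012 (t0 t1 r : K) : SV1E t0 t1 r 3 0 1 2 = 0 := rfl
@[simp] lemma Sv3013 (t0 t1 r : K) : SV1E t0 t1 r 3 0 1 3 = 0 := rfl
@[simp] lemma Sv3020 (t0 t1 r : K) : SV1E t0 t1 r 3 0 2 0 = 0 := rfl
@[simp] lemma Sv3021 (t0 t1 r : K) : SV1E t0 t1 r 3 0 2 1 = 0 := rfl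
@[simp] lemma Sv3022 (t0 t1 r : K) : SV1E t0 t1 r 3 0 2 2 = 0 := rfl
@[simp] lemma Sv3023 (t0 t1 r : K) : SV1E t0 t1 r 3 0 2 3 = 0 := rfl
@[simp] lemma Sv3030 (t0 t1 r : K) : SV1E t0 t1 r 3 0 3 0 = 0 := rfl
@[simp] lemma Sv3031 (t0 t1 r : K) : SV1E t0 t1 r 3 0 3 1 = 0 := rfl
@[simp] lemma Sv3032 (t0 t1 r : K) : SV1E t0 t1 r 3 0 3 2 = 0 := rfl
@[simp] lemma Sv3033 (t0 t1 r : K) : SV1E t0 t1 r 3 0 3 3 = 0 := rfl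
@[simp] lemma Sv3100 (t0 t1 r : K) : SV1E t0 t1 r 3 1 0 0 = 0 := rfl
@[simp] lemma Sv3101 (t0 t1 r : K) : SV1E t0 t1 r 3 1 0 1 = 0 := rfl
@[simp] lemma Sv3102 (t0 t1 r : K) : SV1E t0 t1 r 3 1 0 2 = 0 := rfl
@[simp] lemma Sv3103 (t0 t1 r : K) : SV1E t0 t1 r 3 1 0 3 = 0 := rfl
@[simp] lemma Sv3110 (t0 t1 r : K) : SV1E t0 t1 r 3 1 1 0 = 0 := rfl
@[simp] lemma Sv3111 (t0 t1 r : K) : SV1E t0 t1 r 3 1 1 1 = 0 := rfl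
@[simp] lemma Sv3112 (t0 t1 r : K) : SV1E t0 t1 r 3 1 1 2 = 0 := rfl
@[simp] lemma Sv3113 (t0 t1 r : K) : SV1E t0 t1 r 3 1 1 3 = r * t1 := rfl
@[simp] lemma Sv3120 (t0 t1 r : K) : SV1E t0 t1 r 3 1 2 0 = 0 := rfl
@[simp] lemma Sv3121 (t0 t1 r : K) : SV1E t0 t1 r 3 1 2 1 = 0 := rfl
@[simp] lemma Sv3122 (t0 t1 r : K) : SV1E t0 t1 r 3 1 2 2 = 0 := rfl
@[simp] lemma Sv3123 (t0 t1 r : K) : SV1E t0 t1 r 3 1 2 3 = 0 := rfl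
@[simp] lemma Sv3130 (t0 t1 r : K) : SV1E t0 t1 r 3 1 3 0 = 0 := rfl
@[simp] lemma Sv3131 (t0 t1 r : K) : SV1E t0 t1 r 3 1 3 1 = 0 := rfl
@[simp] lemma Sv3132 (t0 t1 r : K) : SV1E t0 t1 r 3 1 3 2 = 0 := rfl
@[simp] lemma Sv3133 (t0 t1 r : K) : SV1E t0 t1 r 3 1 3 3 = 0 := rfl
@[simp] lemma Sv3200 (t0 t1 r : K) : SV1E t0 t1 r 3 2 0 0 = 0 := rfl
@[simp] lemma Sv3201 (t0 t1 r : K) : SV1E t0 t1 r 3 2 0 1 = 0 := rfl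
@[simp] lemma Sv3202 (t0 t1 r : K) : SV1E t0 t1 r 3 2 0 2 = 0 := rfl
@[simp] lemma Sv3203 (t0 t1 r : K) : SV1E t0 t1 r 3 2 0 3 = 0 := rfl
@[simp] lemma Sv3210 (t0 t1 r : K) : SV1E t0 t1 r 3 2 1 0 = 0 := rfl
@[simp] lemma Sv3211 (t0 t1 r : K) : SV1E t0 t1 r 3 2 1 1 = 0 := rfl
@[simp] lemma Sv3212 (t0 t1 r : K) : SV1E t0 t1 r 3 2 1 2 = 0 := rfl
@[simp] lemma Sv3213 (t0 t1 r : K) : SV1E t0 t1 r 3 2 1 3 = 0 := rfl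
@[simp] lemma Sv3220 (t0 t1 r : K) : SV1E t0 t1 r 3 2 2 0 = 0 := rfl
@[simp] lemma Sv3221 (t0 t1 r : K) : SV1E t0 t1 r 3 2 2 1 = 0 := rfl
@[simp] lemma Sv3222 (t0 t1 r : K) : SV1E t0 t1 r 3 2 2 2 = 0 := rfl
@[simp] lemma Sv3223 (t0 t1 r : K) : SV1E t0 t1 r 3 2 2 3 = r⁻¹ * t1⁻¹ := rfl
@[simp] lemma Sv3230 (t0 t1 r : K) : SV1E t0 t1 r 3 2 3 0 = 0 := rfl
@[simp] lemma Sv3231 (t0 t1 r : K) : SV1E t0 t1 r 3 2 3 1 = 0 := rfl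
@[simp] lemma Sv3232 (t0 t1 r : K) : SV1E t0 t1 r 3 2 3 2 = 0 := rfl
@[simp] lemma Sv3233 (t0 t1 r : K) : SV1E t0 t1 r 3 2 3 3 = 0 := rfl
@[simp] lemma Sv3300 (t0 t1 r : K) : SV1E t0 t1 r 3 3 0 0 = 0 := rfl
@[simp] lemma Sv3301 (t0 t1 r : K) : SV1E t0 t1 r 3 3 0 1 = 0 := rfl
@[simp] lemma Sv3302 (t0 t1 r : K) : SV1E t0 t1 r 3 3 0 2 = 0 := rfl
@[simp] lemma Sv3303 (t0 t1 r : K) : SV1E t0 t1 r 3 3 0 3 = 0 := rfl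
@[simp] lemma Sv3310 (t0 t1 r : K) : SV1E t0 t1 r 3 3 1 0 = 0 := rfl
@[simp] lemma Sv3311 (t0 t1 r : K) : SV1E t0 t1 r 3 3 1 1 = 0 := rfl
@[simp] lemma Sv3312 (t0 t1 r : K) : SV1E t0 t1 r 3 3 1 2 = 0 := rfl
@[simp] lemma Sv3313 (t0 t1 r : K) : SV1E t0 t1 r 3 3 1 3 = 0 := rfl
@[simp] lemma Sv3320 (t0 t1 r : K) : SV1E t0 t1 r 3 3 2 0 = 0 := rfl
@[simp] lemma Sv3321 (t0 t1 r : K) : SV1E t0 t1 r 3 3 2 1 = 0 := rfl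
@[simp] lemma Sv3322 (t0 t1 r : K) : SV1E t0 t1 r 3 3 2 2 = 0 := rfl
@[simp] lemma Sv3323 (t0 t1 r : K) : SV1E t0 t1 r 3 3 2 3 = 0 := rfl
@[simp] lemma Sv3330 (t0 t1 r : K) : SV1E t0 t1 r 3 3 3 0 = 0 := rfl
@[simp] lemma Sv3331 (t0 t1 r : K) : SV1E t0 t1 r 3 3 3 1 = 0 := rfl
@[simp] lemma Sv3332 (t0 t1 r : K) : SV1E t0 t1 r 3 3 3 2 = 0 := rfl
@[simp] lemma Sv3333 (t0 t1 r : K) : SV1E t0 t1 r 3 3 3 3 = -1 := rfl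

@[simp] lemma fv3 : ((3 : Fin 4) : ℕ) = 3 := rfl

set_option maxHeartbeats 4000000 in
lemma RS (t0 t1 r : K) (h0 : t0 ≠ 0) (h1 : t1 ≠ 0) (hr : r ≠ 0) :
    RV1 t0 t1 r * SV1 t0 t1 r = 1 := by
  ext ⟨k, l⟩ ⟨i, j⟩
  simp only [Matrix.mul_apply, Fintype.sum_prod_type, Fin.sum_univ_four, RV1, SV1,
    Matrix.of_apply, Matrix.one_apply, Prod.mk.injEq]
  fin_cases k <;> fin_cases l <;> fin_cases i <;> fin_cases j <;>
    norm_num <;> (try field_simp) <;> (try ring) <;> (try simp)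

lemma ptr2_mulkron (v : Fin 4 → K) (A : Matrix (Fin 4 × Fin 4) (Fin 4 × Fin 4) K) :
    ptr2 ((1 ⊗ₖ Matrix.diagonal v) * A) = Matrix.of fun k i => ∑ j, v j * A (k, j) (i, j) := by
  ext k i
  simp [ptr2, Matrix.mul_apply, Fintype.sum_prod_type, Matrix.one_apply, Matrix.diagonal_apply,
    ite_mul, Finset.mul_sum, Finset.sum_ite_eq, Finset.sum_ite_eq']

/-- The function field `ℚ(x0,x1)`. -/
abbrev K7 : Type := FractionRing (MvPolynomial (Fin 2) ℚ)

/-- The variable `t₀` of `ℚ(t₀,t₁)`. -/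
def t0V : K7 := algebraMap (MvPolynomial (Fin 2) ℚ) K7 (MvPolynomial.X 0)
/-- The variable `t₁` of `ℚ(t₀,t₁)`. -/
def t1V : K7 := algebraMap (MvPolynomial (Fin 2) ℚ) K7 (MvPolynomial.X 1)


lemma t0V_ne : t0V ≠ 0 := by
  have h := MvPolynomial.X_ne_zero (R := ℚ) (σ := Fin 2) 0
  intro hc
  exact h (IsFractionRing.injective (MvPolynomial (Fin 2) ℚ) K7 (by simpa [t0V] using hc))

lemma t1V_ne : t1V ≠ 0 := by
  have h := MvPolynomial.X_ne_zero (R := ℚ) (σ := Fin 2) 1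
  intro hc
  exact h (IsFractionRing.injective (MvPolynomial (Fin 2) ℚ) K7 (by simpa [t1V] using hc))

/-- for `r ∈ {1,-1}` and `h = diag(-1,1,1,-1)` the partial trace
identities `tr₂((id⊗h)∘R_r^{±1}) = id` hold, and any diagonal `h = diag(a,b,c,d)`
satisfying them must equal `diag(-1,1,1,-1)`. -/
theorem V1_enhancement (r : K7) (hr : r = 1 ∨ r = -1) :
    (ptr2 (((1 : Matrix (Fin 4) (Fin 4) K7) ⊗ₖ
        Matrix.diagonal ![-1, 1, 1, -1]) * RV1 t0V t1V r) = 1 ∧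
      ptr2 (((1 : Matrix (Fin 4) (Fin 4) K7) ⊗ₖ
        Matrix.diagonal ![-1, 1, 1, -1]) * (RV1 t0V t1V r)⁻¹) = 1) ∧
    ∀ a b c d : K7,
      ptr2 (((1 : Matrix (Fin 4) (Fin 4) K7) ⊗ₖ
        Matrix.diagonal ![a, b, c, d]) * RV1 t0V t1V r) = 1 →
      ptr2 (((1 : Matrix (Fin 4) (Fin 4) K7) ⊗ₖ
        Matrix.diagonal ![a, b, c, d]) * (RV1 t0V t1V r)⁻¹) = 1 →
      a = -1 ∧ b = 1 ∧ c = 1 ∧ d = -1 := by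
  have ht0 := t0V_ne
  have ht1 := t1V_ne
  have hr0 : r ≠ 0 := by rcases hr with h | h <;> rw [h] <;> norm_num
  have hinv : (RV1 t0V t1V r)⁻¹ = SV1 t0V t1V r :=
    Matrix.inv_eq_right_inv (RS t0V t1V r ht0 ht1 hr0)
  refine ⟨⟨?_, ?_⟩, ?_⟩
  · rw [ptr2_mulkron]
    ext k i
    fin_cases k <;> fin_cases i <;>
      simp only [Matrix.of_apply, Fin.sum_univ_four, RV1, Matrix.one_apply,
        Matrix.cons_val_zero, Matrix.cons_val_one, Matrix.head_cons, fv3,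
        Fin.val_zero, Fin.val_one, Fin.val_two, Fin.isValue] <;>
      simp <;> ring
  · rw [hinv, ptr2_mulkron]
    ext k i
    fin_cases k <;> fin_cases i <;>
      simp only [Matrix.of_apply, Fin.sum_univ_four, SV1, Matrix.one_apply,
        Matrix.cons_val_zero, Matrix.cons_val_one, Matrix.head_cons, fv3,
        Fin.val_zero, Fin.val_one, Fin.val_two, Fin.isValue] <;>
      simp <;> ring
  · intro a b c d h1 _
    rw [ptr2_mulkron] at h1
    have e0 := Matrix.ext_iff.2 h1 0 0
    have e1 := Matrix.ext_iff.2 h1 1 1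
    have e2 := Matrix.ext_iff.2 h1 2 2
    have e3 := Matrix.ext_iff.2 h1 3 3
    simp only [Matrix.of_apply, Fin.sum_univ_four, RV1, Matrix.one_apply_eq,
      Matrix.cons_val_zero, Matrix.cons_val_one, Matrix.head_cons, fv3,
      Fin.val_zero, Fin.val_one, Fin.val_two] at e0 e1 e2 e3
    simp at e0 e1 e2 e3
    have ha : a = -1 := by linear_combination -e0
    have hb : b = 1 := by
      have h2 : (b - 1) * t0V = 0 := by linear_combination e1 - (t0V - 1) * ha
      rcases mul_eq_zero.mp h2 with h' | h'
      · exact sub_eq_zero.mp h'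
      · exact absurd h' ht0
    have hc : c = 1 := by
      have h2 : (c - 1) * t1V = 0 := by linear_combination e2 - (t1V - 1) * ha
      rcases mul_eq_zero.mp h2 with h' | h'
      · exact sub_eq_zero.mp h'
      · exact absurd h' ht1
    have hd : d = -1 := by
      linear_combination -e3 + (t0V + t1V - 2) * ha + (t0V - 1) * hb + (t1V - 1) * hc
    exact ⟨ha, hb, hc, hd⟩
end
end

section
/- If R ∈ End(V⊗V) and R' ∈ End(W⊗W) each satisfy the Yang–Baxter equation, then their interleaved tensor product R ⊗̂ R' := τ ∘ (R⊗R') ∘ τ ∈ End((V⊗W)^{⊗2}), where τ swaps the inner tensor factors W⊗V → V⊗W (and back), also satisfies the Yang–Baxter equation on (V⊗W)^{⊗3}. -/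
open Matrix Kronecker

noncomputable section

variable {K : Type*} [Field K]

/-- The interleaved tensor product `R ⊗̂ R' = τ ∘ (R ⊗ R') ∘ τ` of two R-matrices,
acting on `(V ⊗ W)^{⊗2}`. -/
def khat {m n : ℕ} (R : Matrix (Fin m × Fin m) (Fin m × Fin m) K)
    (R' : Matrix (Fin n × Fin n) (Fin n × Fin n) K) :
    Matrix ((Fin m × Fin n) × (Fin m × Fin n)) ((Fin m × Fin n) × (Fin m × Fin n)) K :=
  Matrix.of fun p q =>
    R (p.1.1, p.2.1) (q.1.1, q.2.1) * R' (p.1.2, p.2.2) (q.1.2, q.2.2)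

/-- Projection to the first-factor (V) components. -/
def projm {m n : ℕ} (p : (Fin m × Fin n) × (Fin m × Fin n) × (Fin m × Fin n)) :
    Fin m × Fin m × Fin m := (p.1.1, p.2.1.1, p.2.2.1)

/-- Projection to the second-factor (W) components. -/
def projn {m n : ℕ} (p : (Fin m × Fin n) × (Fin m × Fin n) × (Fin m × Fin n)) :
    Fin n × Fin n × Fin n := (p.1.2, p.2.1.2, p.2.2.2)

/-- Interleaving two matrices on triple tensor products. -/
def mix {m n : ℕ} (A : Matrix (Fin m × Fin m × Fin m) (Fin m × Fin m × Fin m) K)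
    (B : Matrix (Fin n × Fin n × Fin n) (Fin n × Fin n × Fin n) K) :
    Matrix ((Fin m × Fin n) × (Fin m × Fin n) × (Fin m × Fin n))
      ((Fin m × Fin n) × (Fin m × Fin n) × (Fin m × Fin n)) K :=
  Matrix.of fun p q => A (projm p) (projm q) * B (projn p) (projn q)

/-- The reindexing equivalence. -/
def trieq {m n : ℕ} :
    ((Fin m × Fin n) × (Fin m × Fin n) × (Fin m × Fin n)) ≃
      ((Fin m × Fin m × Fin m) × (Fin n × Fin n × Fin n)) where
  toFun p := (projm p, projn p)
  invFun x := ((x.1.1, x.2.1), (x.1.2.1, x.2.2.1), (x.1.2.2, x.2.2.2))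
  left_inv p := rfl
  right_inv x := rfl

lemma mix_mul {m n : ℕ}
    (A C : Matrix (Fin m × Fin m × Fin m) (Fin m × Fin m × Fin m) K)
    (B D : Matrix (Fin n × Fin n × Fin n) (Fin n × Fin n × Fin n) K) :
    mix A B * mix C D = mix (A * C) (B * D) := by
  ext p q
  simp only [mix, Matrix.mul_apply, Matrix.of_apply]
  rw [← Equiv.sum_comp (trieq (m := m) (n := n)).symm
    (fun r => A (projm p) (projm r) * B (projn p) (projn r) *
      (C (projm r) (projm q) * D (projn r) (projn q)))]
  rw [Fintype.sum_prod_type, Finset.sum_mul_sum]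
  apply Finset.sum_congr rfl
  intro a _
  apply Finset.sum_congr rfl
  intro b _
  have h1 : projm ((trieq (m := m) (n := n)).symm (a, b)) = a := rfl
  have h2 : projn ((trieq (m := m) (n := n)).symm (a, b)) = b := rfl
  rw [h1, h2]; ring

lemma lift12_khat {m n : ℕ} (R : Matrix (Fin m × Fin m) (Fin m × Fin m) K)
    (R' : Matrix (Fin n × Fin n) (Fin n × Fin n) K) :
    lift12 (khat R R') = mix (lift12 R) (lift12 R') := by
  ext p q
  simp only [lift12, khat, mix, projm, projn, Matrix.of_apply, Prod.ext_iff]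
  by_cases h1 : p.2.2.1 = q.2.2.1 <;> by_cases h2 : p.2.2.2 = q.2.2.2 <;>
    simp [h1, h2] <;> ring

lemma lift23_khat {m n : ℕ} (R : Matrix (Fin m × Fin m) (Fin m × Fin m) K)
    (R' : Matrix (Fin n × Fin n) (Fin n × Fin n) K) :
    lift23 (khat R R') = mix (lift23 R) (lift23 R') := by
  ext p q
  simp only [lift23, khat, mix, projm, projn, Matrix.of_apply, Prod.ext_iff]
  by_cases h1 : p.1.1 = q.1.1 <;> by_cases h2 : p.1.2 = q.1.2 <;>
    simp [h1, h2] <;> ring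

/-- the interleaved tensor product of two solutions of the
Yang–Baxter equation again satisfies the Yang–Baxter equation. -/
theorem tensor_product_yang_baxter {m n : ℕ}
    (R : Matrix (Fin m × Fin m) (Fin m × Fin m) K)
    (R' : Matrix (Fin n × Fin n) (Fin n × Fin n) K)
    (hR : lift12 R * lift23 R * lift12 R = lift23 R * lift12 R * lift23 R)
    (hR' : lift12 R' * lift23 R' * lift12 R' = lift23 R' * lift12 R' * lift23 R') :
    lift12 (khat R R') * lift23 (khat R R') * lift12 (khat R R') =
      lift23 (khat R R') * lift12 (khat R R') * lift23 (khat R R') := by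
  rw [lift12_khat, lift23_khat, mix_mul, mix_mul, mix_mul, mix_mul, hR, hR']
end
end

section
/- For weakly-conjugate enhanced R-matrices, the partial trace intertwines: with φ_n = (φ_{n-1}⊗id_W)∘(ν_{n-1}⊗σ)∘γ_n, σ⁻¹∘h'∘σ = h, tr_n-compatibility of γ_n, and ν_{n-1}-invariance of partial traces, one has tr_n((id^{⊗(n-1)}⊗h')∘φ_n∘F∘φ_n⁻¹) = φ_{n-1}∘tr_n((id^{⊗(n-1)}⊗h)∘F)∘φ_{n-1}⁻¹ for any F ∈ End(V^{⊗n}). -/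
open Matrix Kronecker

noncomputable section

variable {K : Type*} [Field K]

section Aux

variable {ι κ : Type*} [Fintype ι] [DecidableEq ι] [Fintype κ] [DecidableEq κ]

lemma ptr2_mul_left (A : Matrix κ κ K) (X : Matrix (κ × ι) (κ × ι) K) :
    ptr2 ((A ⊗ₖ (1 : Matrix ι ι K)) * X) = A * ptr2 X := by
  ext k i
  simp only [ptr2, Matrix.mul_apply, Matrix.of_apply, Fintype.sum_prod_type,
    Matrix.kroneckerMap_apply, Matrix.one_apply, mul_ite, mul_zero, mul_one, ite_mul, zero_mul,
    Finset.sum_ite_eq, Finset.sum_ite_eq', Finset.mem_univ, if_true, Finset.mul_sum]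
  exact Finset.sum_comm

lemma ptr2_mul_right (C : Matrix κ κ K) (X : Matrix (κ × ι) (κ × ι) K) :
    ptr2 (X * (C ⊗ₖ (1 : Matrix ι ι K))) = ptr2 X * C := by
  ext k i
  simp only [ptr2, Matrix.mul_apply, Matrix.of_apply, Fintype.sum_prod_type,
    Matrix.kroneckerMap_apply, Matrix.one_apply, mul_ite, mul_zero, mul_one, ite_mul, zero_mul,
    Finset.sum_ite_eq, Finset.sum_ite_eq', Finset.mem_univ, if_true, Finset.sum_mul]
  exact Finset.sum_comm

lemma ptr2_comm (B : Matrix ι ι K) (X : Matrix (κ × ι) (κ × ι) K) :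
    ptr2 (X * ((1 : Matrix κ κ K) ⊗ₖ B)) = ptr2 (((1 : Matrix κ κ K) ⊗ₖ B) * X) := by
  ext k i
  simp only [ptr2, Matrix.mul_apply, Matrix.of_apply, Fintype.sum_prod_type,
    Matrix.kroneckerMap_apply, Matrix.one_apply, mul_ite, mul_zero, mul_one, ite_mul, zero_mul,
    one_mul]
  conv_lhs => enter [2, x]; rw [Finset.sum_comm]
  conv_rhs => enter [2, x]; rw [Finset.sum_comm]
  simp only [Finset.sum_ite_eq, Finset.sum_ite_eq', Finset.mem_univ, if_true]
  rw [Finset.sum_comm]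
  exact Finset.sum_congr rfl fun j _ => Finset.sum_congr rfl fun s _ => mul_comm _ _

lemma kmul_right (A C : Matrix κ κ K) (B D : Matrix ι ι K)
    (X : Matrix (κ × ι) (κ × ι) K) :
    (X * (A ⊗ₖ B)) * (C ⊗ₖ D) = X * ((A * C) ⊗ₖ (B * D)) := by
  rw [mul_assoc, ← Matrix.mul_kronecker_mul]

end Aux

/-- for weakly-conjugate enhanced R-matrices, the partial trace
intertwines: `tr_n((id⊗h')∘φ_n∘F∘φ_n⁻¹) = φ_{n-1}∘tr_n((id⊗h)∘F)∘φ_{n-1}⁻¹`. -/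
theorem weak_conjugacy_partial_trace
    (ι κ : Type*) [Fintype ι] [DecidableEq ι] [Fintype κ] [DecidableEq κ]
    (h h' σ : Matrix ι ι K) (ν φprev : Matrix κ κ K)
    (γ F φn : Matrix (κ × ι) (κ × ι) K)
    (hσ : IsUnit σ.det) (hν : IsUnit ν.det) (hγ : IsUnit γ.det)
    (hφprev : IsUnit φprev.det) (hh : IsUnit h.det)
    (hφn : φn = (φprev ⊗ₖ (1 : Matrix ι ι K)) * (ν ⊗ₖ σ) * γ)
    (hi : σ⁻¹ * h' * σ = h)
    (hii : ptr2 (((1 : Matrix κ κ K) ⊗ₖ h) * (γ * F * γ⁻¹)) =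
      ptr2 (((1 : Matrix κ κ K) ⊗ₖ h) * F))
    (hiii : ν * ptr2 (((1 : Matrix κ κ K) ⊗ₖ h) * F) * ν⁻¹ =
      ptr2 (((1 : Matrix κ κ K) ⊗ₖ h) * F)) :
    ptr2 (((1 : Matrix κ κ K) ⊗ₖ h') * (φn * F * φn⁻¹)) =
      φprev * ptr2 (((1 : Matrix κ κ K) ⊗ₖ h) * F) * φprev⁻¹ := by
  have hinv : φn⁻¹ = γ⁻¹ * ((ν⁻¹ ⊗ₖ σ⁻¹) * (φprev⁻¹ ⊗ₖ (1 : Matrix ι ι K))) := by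
    rw [hφn, Matrix.mul_inv_rev, Matrix.mul_inv_rev, Matrix.inv_kronecker,
      Matrix.inv_kronecker, inv_one]
  have e1 : ((1 : Matrix κ κ K) ⊗ₖ h') * (φn * F * φn⁻¹)
      = (φprev ⊗ₖ (1 : Matrix ι ι K)) *
          ((ν ⊗ₖ (1 : Matrix ι ι K)) *
            ((((1 : Matrix κ κ K) ⊗ₖ (h' * σ)) * (γ * F * γ⁻¹)) *
              ((1 : Matrix κ κ K) ⊗ₖ σ⁻¹)) *
            (ν⁻¹ ⊗ₖ (1 : Matrix ι ι K))) *
          (φprev⁻¹ ⊗ₖ (1 : Matrix ι ι K)) := by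
    rw [hinv, hφn]
    simp only [← mul_assoc, ← Matrix.mul_kronecker_mul, kmul_right, one_mul, mul_one]
  rw [e1, ptr2_mul_right, ptr2_mul_left, ptr2_mul_right, ptr2_mul_left, ptr2_comm,
    ← mul_assoc ((1 : Matrix κ κ K) ⊗ₖ σ⁻¹), ← Matrix.mul_kronecker_mul, one_mul,
    ← mul_assoc σ⁻¹ h' σ, hi, hii, hiii]
end
end
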